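/- arXiv:2107.04627 — 10 statements merged into one kernel-verified Lean document; each statement's English description precedes it below -/
import Mathlib

section
/- Let g be a finite-dimensional real Lie algebra, let D̂, D̂' : g → Mat_N be injective matrix representations whose values are trace-free anti-hermitian matrices, and let φ_M, φ'_M : g → (ℂ^N)^n be ℝ-linear maps whose images generate (ℂ^N)^n as a right Mat_N-module. Then the following are equivalent: (i) there exist a ℂ-algebra automorphism φ of Mat_N, a Lie algebra automorphism ψ of g, and a bijective additive map ψ̂ : (ℂ^N)^n → (ℂ^N)^n such that ψ̂(v·A) = ψ̂(v)·φ(A) for all v ∈ (ℂ^N)^n and A ∈ Mat_N, D̂'(∂)φ(A) − φ(A)D̂'(∂) = φ(D̂(ψ(∂))A − A·D̂(ψ(∂))) for all ∂ ∈ g and A ∈ Mat_N, and ψ̂(φ_M(ψ(∂))) = φ'_M(∂) for all ∂ ∈ g; (ii) there exist X ∈ GL(n,ℂ), U ∈ GL(N,ℂ) and a Lie algebra automorphism ψ of g such that D̂'(∂) = U⁻¹·D̂(ψ(∂))·U and φ'_M(∂) = φ_M(ψ(∂))·(X ⊗ U) for all ∂ ∈ g. -/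
open Matrix Kronecker

/-- The right action of `Mat_N` on `(ℂ^N)^n` (tuples of row vectors). -/
noncomputable def rAct {N n : ℕ} (v : Fin n → Fin N → ℂ) (A : Matrix (Fin N) (Fin N) ℂ) :
    Fin n → Fin N → ℂ :=
  fun i => Matrix.vecMul (v i) A

/-- The right action of `Mat_{nN}` (indexed by `Fin n × Fin N`) on `(ℂ^N)^n`, identifying
`(ℂ^N)^n` with row vectors of length `nN`. -/
noncomputable def kAct {N n : ℕ} (v : Fin n → Fin N → ℂ)
    (B : Matrix (Fin n × Fin N) (Fin n × Fin N) ℂ) : Fin n → Fin N → ℂ :=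
  fun i j => Matrix.vecMul (fun p : Fin n × Fin N => v p.1 p.2) B (i, j)

/-- The image of `f` generates `(ℂ^N)^n` as a right `Mat_N`-module. -/
def Generates {g : Type*} {N n : ℕ} (f : g → (Fin n → Fin N → ℂ)) : Prop :=
  ∀ w : Fin n → Fin N → ℂ, ∃ (m : ℕ) (x : Fin m → g) (A : Fin m → Matrix (Fin N) (Fin N) ℂ),
    w = ∑ t, rAct (f (x t)) (A t)

/-!
By Skolem–Noether every automorphism `φ` of `Mat_N` is a conjugation `A ↦ U⁻¹ A U`: a nonzero
intertwiner of `φ` with the identity is built from the images of the matrix units, and it is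
invertible because its kernel is invariant under all matrices. The derivation condition then
says that `U D̂'(∂) U⁻¹ - D̂(ψ ∂)` is central, hence scalar, hence zero since it is trace-free.
Viewing `(ℂ^N)^n` as `n × N` matrices, `v ↦ ψ̂(v) U⁻¹` is additive and commutes with right
multiplication, so it is left multiplication by some `Y`, invertible because `ψ̂` is injective;
`Y` is `Xᵀ` in the Kronecker form. The converse is a direct computation.
-/

namespace Matrix

variable {K : Type*} [Field K]

section SkolemNoether

variable {ι : Type*} [Fintype ι] [DecidableEq ι]

def algHomIntertwiner (φ : Matrix ι ι K →ₐ[K] Matrix ι ι K) (z k : ι) : Matrix ι ι K :=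
  ∑ l, φ (single l z 1) * single k l 1

theorem mul_algHomIntertwiner (φ : Matrix ι ι K →ₐ[K] Matrix ι ι K) (z k : ι)
    (A : Matrix ι ι K) :
    φ A * algHomIntertwiner φ z k = algHomIntertwiner φ z k * A := by
  induction A using Matrix.induction_on' with
  | h_zero => simp
  | h_add p q hp hq => rw [map_add, add_mul, hp, hq, mul_add]
  | h_std_basis a b x =>
    have hsmul : ∀ i j : ι, single i j x = x • single i j 1 := fun i j => by
      rw [smul_single, smul_eq_mul, mul_one]
    rw [algHomIntertwiner, Finset.mul_sum, Finset.sum_mul, Finset.sum_eq_single b,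
      Finset.sum_eq_single a]
    · rw [← mul_assoc, ← map_mul, mul_assoc, single_mul_single_same, single_mul_single_same,
        mul_one, one_mul, hsmul, hsmul, map_smul, smul_mul_assoc, mul_smul_comm]
    · intro l _ hl
      rw [mul_assoc, single_mul_single_of_ne (h := hl), mul_zero]
    · simp
    · intro l _ hl
      rw [← mul_assoc, ← map_mul, single_mul_single_of_ne (h := Ne.symm hl), map_zero, zero_mul]
    · simp

theorem algHomIntertwiner_apply (φ : Matrix ι ι K →ₐ[K] Matrix ι ι K) (z k i : ι) :
    algHomIntertwiner φ z k i z = φ (single z z 1) i k := by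
  rw [algHomIntertwiner, sum_apply, Finset.sum_eq_single z
    (fun l _ hl => mul_single_apply_of_ne (hbj := Ne.symm hl) ..) (by simp),
    mul_single_apply_same, mul_one]

theorem isUnit_of_intertwiner {V : Matrix ι ι K} (φ : Matrix ι ι K → Matrix ι ι K)
    (hV : ∀ A, φ A * V = V * A) (hV0 : V ≠ 0) : IsUnit V := by
  rw [isUnit_iff_isUnit_det, isUnit_iff_ne_zero]
  intro hdet
  obtain ⟨v, hv0, hv⟩ := exists_mulVec_eq_zero_iff.mpr hdet
  obtain ⟨k, hk⟩ := Function.ne_iff.mp hv0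
  refine hV0 (mulVec_injective (funext fun w => ?_))
  have hAv : vecMulVec w (Pi.single k (v k)⁻¹) *ᵥ v = w := by
    rw [vecMulVec_mulVec, single_dotProduct, inv_mul_cancel₀ hk, MulOpposite.op_one, one_smul]
  rw [zero_mulVec, ← hAv, mulVec_mulVec, ← hV, ← mulVec_mulVec, hv, mulVec_zero]

theorem skolemNoether (φ : Matrix ι ι K →ₐ[K] Matrix ι ι K) :
    ∃ U : GL ι K, ∀ A, φ A = (U⁻¹).val * A * U.val := by
  rcases isEmpty_or_nonempty ι with hι | hι
  · exact ⟨1, fun A => Subsingleton.elim _ _⟩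
  obtain ⟨z⟩ := id hι
  have hφz : φ (single z z 1) ≠ 0 := by
    rw [← map_zero φ]
    refine φ.toRingHom.injective.ne fun h => one_ne_zero (α := K) ?_
    simpa using congrFun (congrFun h z) z
  obtain ⟨k, hk⟩ : ∃ k, algHomIntertwiner φ z k ≠ 0 := by
    by_contra! h
    exact hφz (ext fun i k => by rw [← algHomIntertwiner_apply, h k, zero_apply, zero_apply])
  have hV := isUnit_of_intertwiner φ (mul_algHomIntertwiner φ z k) hk
  refine ⟨hV.unit⁻¹, fun A => ?_⟩
  rw [inv_inv, Units.eq_mul_inv_iff_mul_eq, IsUnit.unit_spec, mul_algHomIntertwiner]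

theorem exists_algEquiv_eq_conj (U : GL ι K) :
    ∃ φ : Matrix ι ι K ≃ₐ[K] Matrix ι ι K, ∀ A, φ A = (U⁻¹).val * A * U.val :=
  ⟨MulSemiringAction.toAlgEquiv K _ (ConjAct.toConjAct U⁻¹), fun A => by
    simp [ConjAct.units_smul_def]⟩

theorem eq_zero_of_forall_commute_of_trace_eq_zero [CharZero K] {B : Matrix ι ι K}
    (hB : ∀ A, Commute B A) (htr : B.trace = 0) : B = 0 := by
  obtain ⟨r, rfl⟩ := mem_range_scalar_of_commute_single fun i j _ => (hB _).symm
  rcases isEmpty_or_nonempty ι with hι | hι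
  · exact Subsingleton.elim _ _
  simp only [scalar_apply, trace_diagonal, Finset.sum_const, Finset.card_univ, nsmul_eq_mul,
    mul_eq_zero, Nat.cast_eq_zero, Fintype.card_ne_zero, false_or] at htr
  rw [htr, map_zero]

theorem eq_conj_of_commutator_conj [CharZero K] (U : GL ι K) {P Q : Matrix ι ι K}
    (hP : P.trace = 0) (hQ : Q.trace = 0)
    (h : ∀ A, Q * ((U⁻¹).val * A * U.val) - (U⁻¹).val * A * U.val * Q =
      (U⁻¹).val * (P * A - A * P) * U.val) :
    Q = (U⁻¹).val * P * U.val := by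
  rw [← sub_eq_zero]
  refine eq_zero_of_forall_commute_of_trace_eq_zero (fun A => ?_) ?_
  · have hA := h (U.val * A * (U⁻¹).val)
    simp only [mul_sub, sub_mul, mul_assoc, Units.inv_mul_cancel_left, Units.inv_mul,
      mul_one] at hA
    simp only [Commute, SemiconjBy, sub_mul, mul_sub, mul_assoc]
    rwa [sub_eq_sub_iff_sub_eq_sub]
  · rw [trace_sub, hQ, trace_units_conj', hP, sub_zero]

end SkolemNoether

section RightMultiplication

variable {m ι : Type*} [Fintype m] [DecidableEq m]

theorem exists_eq_mul_of_map_mul [Fintype ι] [DecidableEq ι] {R : Type*} [Semiring R]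
    (T : Matrix m ι R →+ Matrix m ι R)
    (hT : ∀ (M : Matrix m ι R) (A : Matrix ι ι R), T (M * A) = T M * A) :
    ∃ Y : Matrix m m R, ∀ M, T M = Y * M := by
  rcases isEmpty_or_nonempty ι with hι | ⟨⟨z⟩⟩
  · exact ⟨0, fun M => Subsingleton.elim _ _⟩
  refine ⟨∑ i : m, T (single i z 1) * single z i (1 : R), fun M => ?_⟩
  have hM : (∑ i : m, single i z (1 : R) * single z i (1 : R)) * M = M := by
    simp_rw [single_mul_single_same, mul_one, sum_single_one, Matrix.one_mul]
  conv_lhs => rw [← hM]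
  rw [Matrix.sum_mul, map_sum, Matrix.sum_mul]
  refine Finset.sum_congr rfl fun i _ => ?_
  rw [Matrix.mul_assoc, hT, Matrix.mul_assoc]

theorem isUnit_of_mul_left_injective [Nonempty ι] {Y : Matrix m m K}
    (h : Function.Injective fun M : Matrix m ι K => Y * M) : IsUnit Y :=
  mulVec_injective_iff_isUnit.mp fun v w hvw =>
    replicateCol_injective (ι := ι) (h (by simp only [← replicateCol_mulVec, hvw]))

theorem exists_isUnit_eq_mul_mul_of_map_mul_conj [Fintype ι] [DecidableEq ι]
    (T : Matrix m ι K ≃+ Matrix m ι K) (U : GL ι K)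
    (hT : ∀ M A, T (M * A) = T M * ((U⁻¹).val * A * U.val)) :
    ∃ Y : Matrix m m K, IsUnit Y ∧ ∀ M, T M = Y * M * U.val := by
  rcases isEmpty_or_nonempty ι with hι | hι
  · exact ⟨1, isUnit_one, fun M => Subsingleton.elim _ _⟩
  obtain ⟨Y, hY⟩ := exists_eq_mul_of_map_mul
    ((mulRightLinearMap m K (U⁻¹).val).toAddMonoidHom.comp T.toAddMonoidHom)
    fun M A => by
      change T (M * A) * (U⁻¹).val = T M * (U⁻¹).val * A
      simp only [hT, Matrix.mul_assoc, Units.mul_inv, Matrix.mul_one]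
  have hTY : ∀ M, T M = Y * M * U.val := fun M => by
    rw [← hY]
    change T M = T M * (U⁻¹).val * U.val
    rw [Matrix.mul_assoc, Units.inv_mul, Matrix.mul_one]
  refine ⟨Y, isUnit_of_mul_left_injective fun M M' hMM' => T.injective ?_, hTY⟩
  rw [hTY, hTY]
  exact congrArg (· * U.val) hMM'

theorem exists_addEquiv_eq_mul_mul [Fintype ι] [DecidableEq ι] {P : Matrix m m K}
    {Q : Matrix ι ι K} (hP : IsUnit P) (hQ : IsUnit Q) :
    ∃ T : Matrix m ι K ≃+ Matrix m ι K, ∀ M, T M = P * M * Q := by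
  obtain ⟨P, rfl⟩ := hP
  obtain ⟨Q, rfl⟩ := hQ
  refine ⟨{ toFun M := P.val * M * Q.val
            invFun M := (P⁻¹).val * M * (Q⁻¹).val
            left_inv M := ?_
            right_inv M := ?_
            map_add' M M' := by simp only [Matrix.mul_add, Matrix.add_mul] }, fun M => rfl⟩
  · simp only [← Matrix.mul_assoc, Units.inv_mul, Matrix.one_mul]
    simp only [Matrix.mul_assoc, Units.mul_inv, Matrix.mul_one]
  · simp only [← Matrix.mul_assoc, Units.mul_inv, Matrix.one_mul]
    simp only [Matrix.mul_assoc, Units.inv_mul, Matrix.mul_one]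

end RightMultiplication

end Matrix

theorem kAct_kronecker {N n : ℕ} (v : Fin n → Fin N → ℂ) (X : Matrix (Fin n) (Fin n) ℂ)
    (U : Matrix (Fin N) (Fin N) ℂ) :
    kAct v (X ⊗ₖ U) = Xᵀ * of v * U := by
  ext i j
  simp only [kAct, vecMul, dotProduct, mul_apply, kroneckerMap_apply, transpose_apply, of_apply,
    Fintype.sum_prod_type, Finset.sum_mul]
  rw [Finset.sum_comm]
  refine Finset.sum_congr rfl fun k _ => Finset.sum_congr rfl fun l _ => by ring

theorem stmt3_general {g : Type*} [LieRing g] [LieAlgebra ℝ g]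
    {N n : ℕ}
    (D D' : g →ₗ[ℝ] Matrix (Fin N) (Fin N) ℂ)
    (hDtr : ∀ x : g, (D x).trace = 0) (hD'tr : ∀ x : g, (D' x).trace = 0)
    (φM φM' : g →ₗ[ℝ] (Fin n → Fin N → ℂ)) :
    (∃ (φ : Matrix (Fin N) (Fin N) ℂ ≃ₐ[ℂ] Matrix (Fin N) (Fin N) ℂ) (ψ : g ≃ₗ⁅ℝ⁆ g)
        (ψh : (Fin n → Fin N → ℂ) ≃+ (Fin n → Fin N → ℂ)),
      (∀ (v : Fin n → Fin N → ℂ) (A : Matrix (Fin N) (Fin N) ℂ),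
          ψh (rAct v A) = rAct (ψh v) (φ A)) ∧
      (∀ (x : g) (A : Matrix (Fin N) (Fin N) ℂ),
          D' x * φ A - φ A * D' x = φ (D (ψ x) * A - A * D (ψ x))) ∧
      (∀ x : g, ψh (φM (ψ x)) = φM' x))
    ↔ (∃ (X : GL (Fin n) ℂ) (U : GL (Fin N) ℂ) (ψ : g ≃ₗ⁅ℝ⁆ g),
        ∀ x : g, D' x = (U⁻¹).val * D (ψ x) * U.val ∧
          φM' x = kAct (φM (ψ x)) (X.val ⊗ₖ U.val)) := by
  constructor
  · rintro ⟨φ, ψ, ψh, hmod, hder, hφM⟩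
    obtain ⟨U, hφ⟩ := skolemNoether φ.toAlgHom
    simp only [AlgEquiv.coe_toAlgHom] at hφ
    obtain ⟨Y, hY, hψh⟩ := exists_isUnit_eq_mul_mul_of_map_mul_conj ψh U fun M A => by
      rw [← hφ]
      exact hmod M A
    refine ⟨((isUnit_transpose Y).mpr hY).unit, U, ψ, fun x => ⟨?_, ?_⟩⟩
    · exact eq_conj_of_commutator_conj U (hDtr _) (hD'tr x) fun A => by
        simpa only [hφ] using hder x A
    · rw [kAct_kronecker, IsUnit.unit_spec, transpose_transpose, ← hφM]
      exact hψh _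
  · rintro ⟨X, U, ψ, hXU⟩
    obtain ⟨φ, hφ⟩ := exists_algEquiv_eq_conj U
    obtain ⟨T, hT⟩ := exists_addEquiv_eq_mul_mul ((isUnit_transpose _).mpr X.isUnit) U.isUnit
    have hTmul : ∀ M A, T (M * A) = T M * φ A := fun M A => by
      rw [hT, hT, hφ]
      simp only [Matrix.mul_assoc, Units.mul_inv_cancel_left]
    refine ⟨φ, ψ, T, fun v A => hTmul v A, fun x A => ?_, fun x => ?_⟩
    · simp only [hφ, (hXU x).1, mul_sub, sub_mul, mul_assoc, Units.mul_inv_cancel_left]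
    · rw [(hXU x).2, kAct_kronecker]
      exact hT _

/-- Real calculi `(Mat_N, g_D, (ℂ^N)^n, φ_M)` and `(Mat_N, g_{D'}, (ℂ^N)^n, φ'_M)`
are isomorphic iff there are `X ∈ GL(n,ℂ)`, `U ∈ GL(N,ℂ)` and a Lie algebra automorphism `ψ` with
`D̂'(∂) = U⁻¹ D̂(ψ ∂) U` and `φ'_M(∂) = φ_M(ψ ∂) · (X ⊗ U)` for all `∂`. -/
theorem stmt3 {g : Type*} [LieRing g] [LieAlgebra ℝ g] [FiniteDimensional ℝ g]
    {N n : ℕ} (hN : 1 ≤ N)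
    (D D' : g →ₗ[ℝ] Matrix (Fin N) (Fin N) ℂ)
    (hDrep : ∀ x y : g, D ⁅x, y⁆ = D x * D y - D y * D x)
    (hD'rep : ∀ x y : g, D' ⁅x, y⁆ = D' x * D' y - D' y * D' x)
    (hDinj : Function.Injective D) (hD'inj : Function.Injective D')
    (hDtr : ∀ x : g, (D x).trace = 0) (hD'tr : ∀ x : g, (D' x).trace = 0)
    (hDah : ∀ x : g, (D x)ᴴ = -(D x)) (hD'ah : ∀ x : g, (D' x)ᴴ = -(D' x))
    (φM φM' : g →ₗ[ℝ] (Fin n → Fin N → ℂ))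
    (hgen : Generates φM) (hgen' : Generates φM') :
    (∃ (φ : Matrix (Fin N) (Fin N) ℂ ≃ₐ[ℂ] Matrix (Fin N) (Fin N) ℂ) (ψ : g ≃ₗ⁅ℝ⁆ g)
        (ψh : (Fin n → Fin N → ℂ) ≃+ (Fin n → Fin N → ℂ)),
      (∀ (v : Fin n → Fin N → ℂ) (A : Matrix (Fin N) (Fin N) ℂ),
          ψh (rAct v A) = rAct (ψh v) (φ A)) ∧
      (∀ (x : g) (A : Matrix (Fin N) (Fin N) ℂ),
          D' x * φ A - φ A * D' x = φ (D (ψ x) * A - A * D (ψ x))) ∧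
      (∀ x : g, ψh (φM (ψ x)) = φM' x))
    ↔ (∃ (X : GL (Fin n) ℂ) (U : GL (Fin N) ℂ) (ψ : g ≃ₗ⁅ℝ⁆ g),
        ∀ x : g, D' x = (U⁻¹).val * D (ψ x) * U.val ∧
          φM' x = kAct (φM (ψ x)) (X.val ⊗ₖ U.val)) :=
  stmt3_general D D' hDtr hD'tr φM φM'
end

section
/- Let D = ⊕_{j=1}^k λ_j I_{n_j} ∈ Mat_N be a nonzero block-diagonal matrix, where λ₁,…,λ_k are distinct purely imaginary numbers with strictly decreasing imaginary parts and n₁ + ⋯ + n_k = N, and let μ₀ ∈ ℝ∖{0}. Let v = (v₁,…,v_k) and v' = (v'₁,…,v'_k) be nonzero row vectors in ℂ^N partitioned according to the block sizes (v_j, v'_j ∈ ℂ^{n_j}). Consider the condition (ISO): there exist U ∈ GL(N,ℂ), μ ∈ ℝ∖{0} and x ∈ ℂ∖{0} such that μ₀·D = μ·U⁻¹DU and v' = μx·(vU). If D and −D are similar, then (ISO) holds if and only if either (for every j, v_j = 0 ⟺ v'_j = 0) or (for every j, v_j = 0 ⟺ v'_{k+1−j} = 0). If D and −D are not similar, then (ISO)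 holds if and only if for every j, v_j = 0 ⟺ v'_j = 0. -/
/-
Comparing traces of squares in `μ₀ D = μ U⁻¹ D U` gives `μ = ±μ₀`, since `tr D² = -∑ (Im λ)² ≠ 0`.
If `μ = μ₀`, then `U` commutes with `D` and, the `λ_j` being distinct, is block diagonal. If
`μ = -μ₀`, then `U` anticommutes with `D` and maps block `j` to a block with eigenvalue `-λ_j`; as
the columns of `U` are nonzero, negation permutes the `λ_j`, and since it reverses the order of
the imaginary parts, this permutation is `Fin.rev`. The same holds for `U⁻¹`, so the zero blocks of
`v U` are those of `v`, in the same or in reversed order. Conversely, invertible matrices act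
transitively on the nonzero vectors of each block, so a block-diagonal `U` matches any two vectors
with the same zero blocks; composing it with a matrix conjugating `D` to `-D` gives the reversed
patterns.
-/

open Matrix

/-- The `j`-th block of the row vector `v` (partitioned along the sigma type) vanishes. -/
def BlockZero {k : ℕ} {n : Fin k → ℕ} (v : ((j : Fin k) × Fin (n j)) → ℂ) (j : Fin k) : Prop :=
  ∀ a : Fin (n j), v ⟨j, a⟩ = 0

theorem LinearEquiv.exists_apply_eq_of_ne_zero {K V : Type*} [Field K] [AddCommGroup V]
    [Module K V] {u w : V} (hu : u ≠ 0) (hw : w ≠ 0) : ∃ g : V ≃ₗ[K] V, g u = w := by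
  obtain ⟨g, hg⟩ := Submodule.exists_linearEquiv_restrict_eq
    (coord K V u hu ≪≫ₗ toSpanNonzeroSingleton K V w hw)
  refine ⟨g, ?_⟩
  simpa [coord_self] using (hg ⟨u, Submodule.mem_span_singleton_self u⟩).symm

theorem Matrix.exists_isUnit_vecMul_eq {K m : Type*} [Field K] [Fintype m] [DecidableEq m]
    {u w : m → K} (hu : u ≠ 0) (hw : w ≠ 0) : ∃ M : Matrix m m K, IsUnit M ∧ u ᵥ* M = w := by
  obtain ⟨g, hg⟩ := LinearEquiv.exists_apply_eq_of_ne_zero (K := K) hu hw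
  refine ⟨(LinearMap.toMatrix' g.toLinearMap)ᵀ, ?_, ?_⟩
  · rw [isUnit_iff_isUnit_det, det_transpose, LinearMap.det_toMatrix']
    exact g.isUnit_det'
  · rw [vecMul_transpose, LinearMap.toMatrix'_mulVec]
    exact hg

theorem Matrix.trace_diagonal_mul_self_ne_zero {ι : Type*} [Fintype ι] [DecidableEq ι]
    {d : ι → ℂ} (hre : ∀ i, (d i).re = 0) (hd : d ≠ 0) :
    trace (diagonal d * diagonal d) ≠ 0 := by
  obtain ⟨i, hi⟩ := Function.ne_iff.mp hd
  have him : (d i).im ≠ 0 := fun h => hi (Complex.ext (hre i) h)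
  rw [diagonal_mul_diagonal, trace_diagonal]
  intro h
  have hsum := congrArg Complex.re h
  simp only [Complex.re_sum, Complex.mul_re, hre, zero_mul, zero_sub, Complex.zero_re,
    Finset.sum_neg_distrib, neg_eq_zero] at hsum
  exact him <| mul_self_eq_zero.mp <|
    (Finset.sum_eq_zero_iff_of_nonneg fun j _ => mul_self_nonneg _).mp hsum i (Finset.mem_univ _)

theorem Matrix.units_conj_eq_or_eq_neg_of_smul_eq {K ι : Type*} [Field K] [Fintype ι]
    [DecidableEq ι] {A : Matrix ι ι K} (hA : trace (A * A) ≠ 0) {a b : K} (hb : b ≠ 0)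
    {U : GL ι K} (h : a • A = b • ((U⁻¹).val * A * U.val)) :
    (U⁻¹).val * A * U.val = A ∨ (U⁻¹).val * A * U.val = -A := by
  have hsq : a * a * trace (A * A) = b * b * trace (A * A) := by
    have := congrArg (fun M => trace (M * M)) h
    have hconj : (U⁻¹).val * A * U.val * ((U⁻¹).val * A * U.val) =
        (U⁻¹).val * (A * A) * U.val := by
      simp only [mul_assoc, Units.mul_inv_cancel_left]
    simpa only [smul_mul_smul_comm, trace_smul, smul_eq_mul, hconj, trace_units_conj'] using this
  rcases mul_self_eq_mul_self_iff.mp (mul_right_cancel₀ hA hsq) with rfl | rfl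
  · exact Or.inl (smul_right_injective _ hb h).symm
  · rw [neg_smul, ← smul_neg] at h
    exact Or.inr (smul_right_injective _ hb h).symm

theorem Matrix.vecMul_blockDiagonal'_apply {R o : Type*} [NonUnitalNonAssocSemiring R]
    [Fintype o] [DecidableEq o] {m' n' : o → Type*} [∀ j, Fintype (m' j)]
    (W : ∀ j, Matrix (m' j) (n' j) R) (u : (Σ j, m' j) → R) (j : o) (b : n' j) :
    (u ᵥ* blockDiagonal' W) ⟨j, b⟩ = ((fun a => u ⟨j, a⟩) ᵥ* W j) b := by
  simp only [vecMul, dotProduct, Fintype.sum_sigma]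
  rw [Finset.sum_eq_single j]
  · simp [blockDiagonal'_apply_eq]
  · intro i _ hi
    exact Finset.sum_eq_zero fun a _ => by rw [blockDiagonal'_apply_ne W a b hi, mul_zero]
  · simp

theorem Matrix.commute_blockDiagonal'_diagonal {R o : Type*} [CommRing R] [Fintype o]
    [DecidableEq o] {m' : o → Type*} [∀ j, Fintype (m' j)] [∀ j, DecidableEq (m' j)]
    (W : ∀ j, Matrix (m' j) (m' j) R) (lam : o → R) :
    Commute (blockDiagonal' W) (diagonal fun p : Σ j, m' j => lam p.1) := by
  ext ⟨i, a⟩ ⟨j, b⟩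
  rw [mul_diagonal, diagonal_mul]
  by_cases hij : i = j
  · subst hij
    exact mul_comm _ _
  · rw [blockDiagonal'_apply_ne W a b hij, zero_mul, mul_zero]

theorem Units.semiconjBy_of_inv_mul_mul_eq {M : Type*} [Monoid M] {U : Mˣ} {a b : M}
    (h : ↑U⁻¹ * a * ↑U = b) : SemiconjBy (↑U) b a := by
  rw [← h]
  simp [SemiconjBy, mul_assoc]

theorem Matrix.apply_eq_zero_of_semiconjBy_diagonal {R ι : Type*} [CommRing R]
    [NoZeroDivisors R] [Fintype ι] [DecidableEq ι] {d e : ι → R} {M : Matrix ι ι R}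
    (h : SemiconjBy M (diagonal e) (diagonal d)) {p q : ι} (hpq : d p ≠ e q) : M p q = 0 := by
  have hpq' := congrFun (congrFun h.eq p) q
  rw [mul_diagonal, diagonal_mul] at hpq'
  exact (mul_eq_zero.mp (by linear_combination -hpq' : (d p - e q) * M p q = 0)).resolve_left
    (sub_ne_zero.mpr hpq)

theorem Fin.eq_rev_of_strictAnti {k : ℕ} {σ : Fin k → Fin k} (hσ : StrictAnti σ) :
    σ = Fin.rev :=
  (hσ.range_inj Fin.rev_strictAnti).mp <| by
    rw [(Finite.injective_iff_surjective.mp hσ.injective).range_eq, Fin.rev_surjective.range_eq]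

theorem apply_rev_eq_neg_of_strictAnti_im {k : ℕ} {lam : Fin k → ℂ}
    (hdec : StrictAnti fun j => (lam j).im) (hneg : ∀ j, ∃ j', lam j' = -lam j) (j : Fin k) :
    lam j.rev = -lam j := by
  choose σ hσ using hneg
  have hσ_anti : StrictAnti σ := fun i i' hii' =>
    hdec.lt_iff_gt.mp (by simpa only [hσ, Complex.neg_im, neg_lt_neg_iff] using hdec hii')
  rw [← Fin.eq_rev_of_strictAnti hσ_anti, hσ]

section Iso

variable {ι : Type*} [Fintype ι] [DecidableEq ι]

/-- Condition (ISO). -/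
def IsoRelated (μ₀ : ℝ) (D : Matrix ι ι ℂ) (v v' : ι → ℂ) : Prop :=
  ∃ (U : GL ι ℂ) (μ : ℝ) (x : ℂ), μ ≠ 0 ∧ x ≠ 0 ∧
    (μ₀ : ℂ) • D = (μ : ℂ) • ((U⁻¹).val * D * U.val) ∧ v' = ((μ : ℂ) * x) • v ᵥ* U.val

theorem IsoRelated.of_vecMul_of_neg_eq_conj {μ₀ : ℝ} {D : Matrix ι ι ℂ} {S : GL ι ℂ}
    (hS : -D = (S⁻¹).val * D * S.val) {v v' : ι → ℂ} (h : IsoRelated μ₀ D (v ᵥ* S.val) v') :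
    IsoRelated μ₀ D v v' := by
  obtain ⟨U, μ, x, hμ, hx, hconj, rfl⟩ := h
  have hSU : ((S * U)⁻¹).val * D * (S * U).val = -((U⁻¹).val * D * U.val) := by
    calc ((S * U)⁻¹).val * D * (S * U).val = (U⁻¹).val * ((S⁻¹).val * D * S.val) * U.val := by
          simp only [_root_.mul_inv_rev, Units.val_mul, mul_assoc]
      _ = -((U⁻¹).val * D * U.val) := by rw [← hS, mul_neg, neg_mul]
  refine ⟨S * U, -μ, -x, neg_ne_zero.mpr hμ, neg_ne_zero.mpr hx, ?_, ?_⟩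
  · rw [hSU, hconj, Complex.ofReal_neg, neg_smul, smul_neg, neg_neg]
  · rw [Units.val_mul, ← vecMul_vecMul, Complex.ofReal_neg, neg_mul_neg]

end Iso

section Blocks

variable {k : ℕ} {n : Fin k → ℕ}

def BlockSupported {R : Type*} [Zero R] (σ : Fin k → Fin k)
    (M : Matrix (Σ j, Fin (n j)) (Σ j, Fin (n j)) R) : Prop :=
  ∀ p q, p.1 ≠ σ q.1 → M p q = 0

theorem blockZero_smul_iff {c : ℂ} (hc : c ≠ 0) (w : (Σ j, Fin (n j)) → ℂ) (j : Fin k) :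
    BlockZero (c • w) j ↔ BlockZero w j := by
  simp [BlockZero, hc]

theorem BlockSupported.blockZero_vecMul {σ : Fin k → Fin k}
    {M : Matrix (Σ j, Fin (n j)) (Σ j, Fin (n j)) ℂ} (hM : BlockSupported σ M)
    {v : (Σ j, Fin (n j)) → ℂ} {j : Fin k} (hv : BlockZero v (σ j)) : BlockZero (v ᵥ* M) j := by
  intro b
  simp only [vecMul, dotProduct]
  refine Finset.sum_eq_zero fun p _ => ?_
  obtain ⟨i, a⟩ := p
  by_cases hi : i = σ j
  · subst hi
    rw [hv a, zero_mul]
  · rw [hM _ ⟨j, b⟩ hi, mul_zero]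

theorem blockZero_vecMul_units_iff {σ : Fin k → Fin k} (hσ : Function.Involutive σ)
    {U : GL (Σ j, Fin (n j)) ℂ} (hU : BlockSupported σ U.val)
    (hU' : BlockSupported σ (U⁻¹).val) (v : (Σ j, Fin (n j)) → ℂ) (j : Fin k) :
    BlockZero (v ᵥ* U.val) j ↔ BlockZero v (σ j) := by
  refine ⟨fun h => ?_, hU.blockZero_vecMul⟩
  simpa [vecMul_vecMul] using hU'.blockZero_vecMul (v := v ᵥ* U.val) (j := σ j) (by rwa [hσ j])

theorem exists_blockDiagonal'_vecMul_eq {u w : (Σ j, Fin (n j)) → ℂ}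
    (h : ∀ j, BlockZero u j ↔ BlockZero w j) :
    ∃ W : ∀ j, Matrix (Fin (n j)) (Fin (n j)) ℂ,
      (∀ j, IsUnit (W j)) ∧ u ᵥ* blockDiagonal' W = w := by
  have hblock : ∀ j, ∃ W : Matrix (Fin (n j)) (Fin (n j)) ℂ,
      IsUnit W ∧ (fun a => u ⟨j, a⟩) ᵥ* W = fun a => w ⟨j, a⟩ := by
    intro j
    by_cases hu : BlockZero u j
    · refine ⟨1, isUnit_one, funext fun a => ?_⟩
      simp [hu a, (h j).mp hu a]
    · exact exists_isUnit_vecMul_eq (fun h0 => hu (congrFun h0))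
        (fun h0 => hu ((h j).mpr (congrFun h0)))
  choose W hW hvec using hblock
  exact ⟨W, hW, funext fun ⟨j, b⟩ => by rw [vecMul_blockDiagonal'_apply, hvec]⟩

variable {lam : Fin k → ℂ}

theorem blockSupported_id_of_conj_eq (hlam : Function.Injective lam)
    {U : GL (Σ j, Fin (n j)) ℂ}
    (h : (U⁻¹).val * diagonal (fun p => lam p.1) * U.val = diagonal fun p => lam p.1) :
    BlockSupported id U.val ∧ BlockSupported id (U⁻¹).val := by
  have hU := Units.semiconjBy_of_inv_mul_mul_eq h
  exact ⟨fun p q hpq => apply_eq_zero_of_semiconjBy_diagonal hU (hlam.ne hpq),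
    fun p q hpq => apply_eq_zero_of_semiconjBy_diagonal hU.units_inv_symm_left (hlam.ne hpq)⟩

theorem blockSupported_rev_of_semiconjBy_neg (hn : ∀ j, 0 < n j)
    (hdec : StrictAnti fun j => (lam j).im) {M : Matrix (Σ j, Fin (n j)) (Σ j, Fin (n j)) ℂ}
    (hM : IsUnit M)
    (h : SemiconjBy M (-diagonal fun p => lam p.1) (diagonal fun p => lam p.1)) :
    BlockSupported Fin.rev M := by
  rw [diagonal_neg] at h
  have hsupp : ∀ p q, lam p.1 ≠ -lam q.1 → M p q = 0 :=
    fun p q => apply_eq_zero_of_semiconjBy_diagonal h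
  have hneg : ∀ j, ∃ j', lam j' = -lam j := by
    intro j
    obtain ⟨p, hp⟩ : ∃ p, M p ⟨j, ⟨0, hn j⟩⟩ ≠ 0 := by
      by_contra! hcol
      exact ((isUnit_iff_isUnit_det M).mp hM).ne_zero (det_eq_zero_of_column_eq_zero _ hcol)
    exact ⟨p.1, not_not.mp fun hne => hp (hsupp _ _ hne)⟩
  have hlam : Function.Injective lam := Function.Injective.of_comp (f := Complex.im) hdec.injective
  exact fun p q hpq => hsupp p q fun hpq' =>
    hpq (hlam (hpq'.trans (apply_rev_eq_neg_of_strictAnti_im hdec hneg q.1).symm))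

theorem blockSupported_rev_of_conj_eq_neg (hn : ∀ j, 0 < n j)
    (hdec : StrictAnti fun j => (lam j).im) {U : GL (Σ j, Fin (n j)) ℂ}
    (h : (U⁻¹).val * diagonal (fun p => lam p.1) * U.val = -diagonal fun p => lam p.1) :
    BlockSupported Fin.rev U.val ∧ BlockSupported Fin.rev (U⁻¹).val := by
  have hU := Units.semiconjBy_of_inv_mul_mul_eq h
  have hU' := hU.units_inv_symm_left.neg_right
  rw [neg_neg] at hU'
  exact ⟨blockSupported_rev_of_semiconjBy_neg hn hdec U.isUnit hU,
    blockSupported_rev_of_semiconjBy_neg hn hdec U⁻¹.isUnit hU'⟩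

theorem blockZero_iff_or_rev_of_isoRelated (hn : ∀ j, 0 < n j) (hre : ∀ j, (lam j).re = 0)
    (hdec : StrictAnti fun j => (lam j).im) (hd : (fun p : Σ j, Fin (n j) => lam p.1) ≠ 0)
    {μ₀ : ℝ} {v v' : (Σ j, Fin (n j)) → ℂ}
    (h : IsoRelated μ₀ (diagonal fun p => lam p.1) v v') :
    (∀ j, BlockZero v j ↔ BlockZero v' j) ∨
      ((∃ S : GL (Σ j, Fin (n j)) ℂ, -diagonal (fun p => lam p.1) =
          (S⁻¹).val * diagonal (fun p => lam p.1) * S.val) ∧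
        ∀ j, BlockZero v j ↔ BlockZero v' j.rev) := by
  obtain ⟨U, μ, x, hμ, hx, hconj, rfl⟩ := h
  simp_rw [blockZero_smul_iff (mul_ne_zero (Complex.ofReal_ne_zero.mpr hμ) hx)]
  rcases units_conj_eq_or_eq_neg_of_smul_eq
    (trace_diagonal_mul_self_ne_zero (fun p : Σ j, Fin (n j) => hre p.1) hd)
    (Complex.ofReal_ne_zero.mpr hμ) hconj with hU | hU
  · have hlam : Function.Injective lam :=
      Function.Injective.of_comp (f := Complex.im) hdec.injective
    obtain ⟨hsupp, hsupp'⟩ := blockSupported_id_of_conj_eq hlam hU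
    exact Or.inl fun j => (blockZero_vecMul_units_iff (fun _ => rfl) hsupp hsupp' v j).symm
  · obtain ⟨hsupp, hsupp'⟩ := blockSupported_rev_of_conj_eq_neg hn hdec hU
    refine Or.inr ⟨⟨U, hU.symm⟩, fun j => ?_⟩
    rw [blockZero_vecMul_units_iff Fin.rev_involutive hsupp hsupp', Fin.rev_rev]

theorem isoRelated_of_blockZero_iff (lam : Fin k → ℂ) {μ₀ : ℝ} (hμ₀ : μ₀ ≠ 0)
    {v v' : (Σ j, Fin (n j)) → ℂ} (h : ∀ j, BlockZero v j ↔ BlockZero v' j) :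
    IsoRelated μ₀ (diagonal fun p : Σ j, Fin (n j) => lam p.1) v v' := by
  obtain ⟨W, hW, hvec⟩ := exists_blockDiagonal'_vecMul_eq h
  have hunit : IsUnit (blockDiagonal' W) := (Pi.isUnit_iff.mpr hW).map (blockDiagonal'RingHom _ ℂ)
  have hμ₀' : (μ₀ : ℂ) ≠ 0 := Complex.ofReal_ne_zero.mpr hμ₀
  refine ⟨hunit.unit, μ₀, (μ₀ : ℂ)⁻¹, hμ₀, inv_ne_zero hμ₀', ?_, ?_⟩
  · rw [IsUnit.unit_spec, mul_assoc, ← (commute_blockDiagonal'_diagonal W lam).eq,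
      ← mul_assoc, hunit.val_inv_mul, one_mul]
  · rw [mul_inv_cancel₀ hμ₀', one_smul, IsUnit.unit_spec, hvec]

theorem isoRelated_of_blockZero_iff_rev (hn : ∀ j, 0 < n j)
    (hdec : StrictAnti fun j => (lam j).im) {μ₀ : ℝ} (hμ₀ : μ₀ ≠ 0)
    (hsim : ∃ S : GL (Σ j, Fin (n j)) ℂ, -diagonal (fun p => lam p.1) =
      (S⁻¹).val * diagonal (fun p => lam p.1) * S.val)
    {v v' : (Σ j, Fin (n j)) → ℂ} (h : ∀ j, BlockZero v j ↔ BlockZero v' j.rev) :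
    IsoRelated μ₀ (diagonal fun p => lam p.1) v v' := by
  obtain ⟨S, hS⟩ := hsim
  obtain ⟨hsupp, hsupp'⟩ := blockSupported_rev_of_conj_eq_neg hn hdec hS.symm
  refine IsoRelated.of_vecMul_of_neg_eq_conj hS (isoRelated_of_blockZero_iff lam hμ₀ fun j => ?_)
  rw [blockZero_vecMul_units_iff Fin.rev_involutive hsupp hsupp', h, Fin.rev_rev]

end Blocks

theorem stmt7_general {k : ℕ} (n : Fin k → ℕ) (hn : ∀ j, 0 < n j)
    (lam : Fin k → ℂ) (hre : ∀ j, (lam j).re = 0)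
    (hdec : StrictAnti fun j => (lam j).im)
    (D : Matrix ((j : Fin k) × Fin (n j)) ((j : Fin k) × Fin (n j)) ℂ)
    (hD : D = Matrix.diagonal fun p => lam p.1)
    (hD0 : D ≠ 0)
    (μ₀ : ℝ) (hμ₀ : μ₀ ≠ 0)
    (v v' : ((j : Fin k) × Fin (n j)) → ℂ) :
    ((∃ S : GL ((j : Fin k) × Fin (n j)) ℂ, -D = (S⁻¹).val * D * S.val) →
      ((∃ (U : GL ((j : Fin k) × Fin (n j)) ℂ) (μ : ℝ) (x : ℂ), μ ≠ 0 ∧ x ≠ 0 ∧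
          (μ₀ : ℂ) • D = (μ : ℂ) • ((U⁻¹).val * D * U.val) ∧
          v' = ((μ : ℂ) * x) • Matrix.vecMul v U.val) ↔
        ((∀ j, BlockZero v j ↔ BlockZero v' j) ∨
         (∀ j, BlockZero v j ↔ BlockZero v' j.rev)))) ∧
    (¬ (∃ S : GL ((j : Fin k) × Fin (n j)) ℂ, -D = (S⁻¹).val * D * S.val) →
      ((∃ (U : GL ((j : Fin k) × Fin (n j)) ℂ) (μ : ℝ) (x : ℂ), μ ≠ 0 ∧ x ≠ 0 ∧
          (μ₀ : ℂ) • D = (μ : ℂ) • ((U⁻¹).val * D * U.val) ∧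
          v' = ((μ : ℂ) * x) • Matrix.vecMul v U.val) ↔
        (∀ j, BlockZero v j ↔ BlockZero v' j))) := by
  subst hD
  have forward (h : IsoRelated μ₀ _ v v') :=
    blockZero_iff_or_rev_of_isoRelated hn hre hdec (mt diagonal_eq_zero.mpr hD0) h
  refine ⟨fun hsim => ⟨fun h => (forward h).imp_right And.right, ?_⟩,
    fun hsim => ⟨fun h => (forward h).resolve_right fun h' => hsim h'.1,
      isoRelated_of_blockZero_iff lam hμ₀⟩⟩
  rintro (h | h)
  · exact isoRelated_of_blockZero_iff lam hμ₀ h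
  · exact isoRelated_of_blockZero_iff_rev hn hdec hμ₀ hsim h

/-- For `D = ⊕ⱼ λⱼ I_{nⱼ}` with distinct purely imaginary eigenvalues of strictly
decreasing imaginary parts and nonzero row vectors `v, v'`, the condition (ISO) — existence of
`U ∈ GL(N,ℂ)`, `μ ∈ ℝ∖{0}`, `x ∈ ℂ∖{0}` with `μ₀ D = μ U⁻¹ D U` and `v' = μ x (v U)` — holds
iff the zero-block patterns of `v` and `v'` agree (up to reversal when `D` and `-D` are
similar). -/
theorem stmt7 {k : ℕ} (n : Fin k → ℕ) (hn : ∀ j, 0 < n j)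
    (lam : Fin k → ℂ) (hre : ∀ j, (lam j).re = 0)
    (hdec : StrictAnti fun j => (lam j).im)
    (D : Matrix ((j : Fin k) × Fin (n j)) ((j : Fin k) × Fin (n j)) ℂ)
    (hD : D = Matrix.diagonal fun p => lam p.1)
    (hD0 : D ≠ 0)
    (μ₀ : ℝ) (hμ₀ : μ₀ ≠ 0)
    (v v' : ((j : Fin k) × Fin (n j)) → ℂ) (hv : v ≠ 0) (hv' : v' ≠ 0) :
    ((∃ S : GL ((j : Fin k) × Fin (n j)) ℂ, -D = (S⁻¹).val * D * S.val) →
      ((∃ (U : GL ((j : Fin k) × Fin (n j)) ℂ) (μ : ℝ) (x : ℂ), μ ≠ 0 ∧ x ≠ 0 ∧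
          (μ₀ : ℂ) • D = (μ : ℂ) • ((U⁻¹).val * D * U.val) ∧
          v' = ((μ : ℂ) * x) • Matrix.vecMul v U.val) ↔
        ((∀ j, BlockZero v j ↔ BlockZero v' j) ∨
         (∀ j, BlockZero v j ↔ BlockZero v' j.rev)))) ∧
    (¬ (∃ S : GL ((j : Fin k) × Fin (n j)) ℂ, -D = (S⁻¹).val * D * S.val) →
      ((∃ (U : GL ((j : Fin k) × Fin (n j)) ℂ) (μ : ℝ) (x : ℂ), μ ≠ 0 ∧ x ≠ 0 ∧
          (μ₀ : ℂ) • D = (μ : ℂ) • ((U⁻¹).val * D * U.val) ∧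
          v' = ((μ : ℂ) * x) • Matrix.vecMul v U.val) ↔
        (∀ j, BlockZero v j ↔ BlockZero v' j))) :=
  stmt7_general n hn lam hre hdec D hD hD0 μ₀ hμ₀ v v'
end

section
/- Let D ∈ Mat_N be a nonzero trace-free anti-hermitian matrix with exactly k distinct eigenvalues, and suppose D is not similar to −D. Then the number of equivalence classes of the relation ~_D on the set of nonzero row vectors of ℂ^N equals 2^k − 1. -/
/-!
A nonzero anti-hermitian `D` has `tr (D * D) = -tr (Dᴴ * D) ≠ 0`, so taking traces of the
square of `D = μ • U⁻¹ D U` forces `μ ^ 2 = 1`; `μ = -1` would make `D` similar to `-D`.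
Absorbing the scalar `x` into `U`, the relation `~_D` is the orbit relation of the centralizer
of `D` in `GL(N, ℂ)` acting on row vectors. After a unitary diagonalization
`D = P diag(d) P⁻¹`, this centralizer is the group of invertible block-diagonal matrices for
the eigenspaces of `diag(d)`, and an orbit is determined by the set of eigenvalues on whose
eigenspace a vector has a nonzero component: within one eigenspace any nonzero vector can be
moved to any other. Every nonempty set of eigenvalues occurs, so there are `2 ^ k - 1` orbits.
-/

open Matrix

/-- The relation `~_D` on nonzero row vectors of `ℂ^N`: `v ~_D v'` iff there are `U ∈ GL(N,ℂ)`,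
`μ ∈ ℝ∖{0}` and `x ∈ ℂ∖{0}` with `D = μ U⁻¹ D U` and `v' = μ x (v U)`. Its classes are the
isomorphism classes of real calculi `(Mat_N, ⟨∂⟩_D, ℂ^N, φ)`. -/
def simRel {N : ℕ} (D : Matrix (Fin N) (Fin N) ℂ)
    (v w : {v : Fin N → ℂ // v ≠ 0}) : Prop :=
  ∃ (U : GL (Fin N) ℂ) (μ : ℝ) (x : ℂ), μ ≠ 0 ∧ x ≠ 0 ∧
    D = (μ : ℂ) • ((U⁻¹).val * D * U.val) ∧
    (w : Fin N → ℂ) = ((μ : ℂ) * x) • Matrix.vecMul (v : Fin N → ℂ) U.val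

theorem Nat.card_quot_eq_ncard_range {α β : Type*} {r : α → α → Prop} {f : α → β}
    (h : ∀ a b, r a b ↔ f a = f b) : Nat.card (Quot r) = (Set.range f).ncard := by
  obtain rfl : r = Setoid.ker f := funext₂ fun a b => propext ((h a b).trans Setoid.ker_def.symm)
  rw [← Nat.card_coe_set_eq]
  exact Nat.card_congr (Setoid.quotientKerEquivRange f)

namespace Matrix

section Centralizer

variable {n R : Type*} [Fintype n] [DecidableEq n] [Semiring R]

def CentralizerRel (A : Matrix n n R) (v w : n → R) : Prop :=
  ∃ U : GL n R, Commute (U : Matrix n n R) A ∧ w = v ᵥ* U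

namespace CentralizerRel

variable {A : Matrix n n R} {u v w : n → R}

theorem refl (A : Matrix n n R) (v : n → R) : CentralizerRel A v v :=
  ⟨1, Commute.one_left A, by simp⟩

theorem symm : CentralizerRel A v w → CentralizerRel A w v := by
  rintro ⟨U, hU, rfl⟩
  exact ⟨U⁻¹, hU.units_inv_left, by simp [vecMul_vecMul]⟩

theorem trans : CentralizerRel A u v → CentralizerRel A v w → CentralizerRel A u w := by
  rintro ⟨U, hU, rfl⟩ ⟨V, hV, rfl⟩
  exact ⟨U * V, by simpa using hU.mul_left hV, by simp [vecMul_vecMul]⟩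

theorem conj (P : GL n R) (h : CentralizerRel A v w) :
    CentralizerRel ((P⁻¹).val * A * P.val) (v ᵥ* P.val) (w ᵥ* P.val) := by
  obtain ⟨U, hU, rfl⟩ := h
  refine ⟨P⁻¹ * U * P, ?_, by simp [vecMul_vecMul, mul_assoc]⟩
  simp only [Commute, SemiconjBy, Units.val_mul, mul_assoc, Units.mul_inv_cancel_left]
  rw [← mul_assoc (U : Matrix n n R), hU.eq, mul_assoc]

end CentralizerRel

theorem centralizerRel_conj_iff (P : GL n R) {A : Matrix n n R} {v w : n → R} :
    CentralizerRel ((P⁻¹).val * A * P.val) (v ᵥ* P.val) (w ᵥ* P.val) ↔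
      CentralizerRel A v w := by
  refine ⟨fun h => ?_, CentralizerRel.conj P⟩
  simpa [vecMul_vecMul, mul_assoc] using h.conj P⁻¹

end Centralizer

section Diagonal

variable {n K : Type*} [Fintype n] [DecidableEq n] [Field K]

theorem commute_diagonal_iff {M : Matrix n n K} {d : n → K} :
    Commute M (diagonal d) ↔ ∀ i j, M i j ≠ 0 → d i = d j := by
  simp only [Commute, SemiconjBy, ← Matrix.ext_iff, mul_diagonal, diagonal_mul]
  refine forall₂_congr fun i j => ?_
  rw [mul_comm (d i), ← sub_eq_zero, ← mul_sub, mul_eq_zero, sub_eq_zero, or_iff_not_imp_left,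
    eq_comm (a := d j)]

def eigenvalueSupport (d : n → K) (v : n → K) : Set K :=
  d '' Function.support v

theorem eigenvalueSupport_vecMul_subset {d : n → K} {M : Matrix n n K}
    (hM : Commute M (diagonal d)) (v : n → K) :
    eigenvalueSupport d (v ᵥ* M) ⊆ eigenvalueSupport d v := by
  rintro _ ⟨j, hj, rfl⟩
  obtain ⟨i, -, hi⟩ := Finset.exists_ne_zero_of_sum_ne_zero hj
  exact ⟨i, left_ne_zero_of_mul hi, commute_diagonal_iff.mp hM i j (right_ne_zero_of_mul hi)⟩

theorem CentralizerRel.eigenvalueSupport_eq {d v w : n → K}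
    (h : CentralizerRel (diagonal d) v w) : eigenvalueSupport d v = eigenvalueSupport d w := by
  obtain ⟨U, hU, rfl⟩ := h
  refine Set.Subset.antisymm ?_ (eigenvalueSupport_vecMul_subset hU v)
  simpa [vecMul_vecMul] using eigenvalueSupport_vecMul_subset hU.units_inv_left (v ᵥ* U)

/-- The witness is the rank-one perturbation `1 + e_p (w - v) / v p` of the identity, of
determinant `w p / v p`; it acts only within the fiber of `d p`. -/
theorem centralizerRel_of_eqOn_compl_fiber {d v w : n → K} {p : n} (hv : v p ≠ 0)
    (hw : w p ≠ 0) (h : Set.EqOn v w {j | d j ≠ d p}) : CentralizerRel (diagonal d) v w := by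
  have hdet : (1 + vecMulVec (Pi.single p (v p)⁻¹) (w - v)).det ≠ 0 := by
    rw [vecMulVec_eq (Fin 1), det_one_add_replicateCol_mul_replicateRow, dotProduct_single,
      Pi.sub_apply, mul_comm, mul_sub, inv_mul_cancel₀ hv, add_sub_cancel]
    exact mul_ne_zero (inv_ne_zero hv) hw
  have hR : Commute (vecMulVec (Pi.single p (v p)⁻¹) (w - v)) (diagonal d) := by
    refine commute_diagonal_iff.mpr fun i j hij => ?_
    obtain rfl : i = p := by by_contra hip; simp [vecMulVec_apply, hip] at hij
    by_contra hne
    exact hij (by simp [vecMulVec_apply, h (Ne.symm hne)])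
  refine ⟨((isUnit_iff_isUnit_det _).mpr hdet.isUnit).unit, (Commute.one_left _).add_left hR,
    ?_⟩
  simp [vecMul_add, vecMul_vecMulVec, hv]

theorem centralizerRel_of_eigenvalueSupport_eq_of_eqOn {d : n → K} (T : Finset K) :
    ∀ {v w : n → K}, eigenvalueSupport d v = eigenvalueSupport d w →
      Set.EqOn v w {j | d j ∉ T} → CentralizerRel (diagonal d) v w := by
  classical
  induction T using Finset.induction_on with
  | empty =>
    intro v w _ h
    obtain rfl : v = w := funext fun j => h (Finset.notMem_empty (d j))
    exact .refl _ _
  | insert c T _ ih =>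
    intro v w hvw hoff
    by_cases hc : c ∈ eigenvalueSupport d v
    · obtain ⟨p, hp, rfl⟩ := hc
      obtain ⟨q, hq, hqp⟩ : d p ∈ eigenvalueSupport d w := hvw ▸ ⟨p, hp, rfl⟩
      let flatten (u : n → K) : n → K := fun j => if d j = d p then 1 else u j
      have hv : CentralizerRel (diagonal d) v (flatten v) :=
        centralizerRel_of_eqOn_compl_fiber hp (by simp [flatten]) fun j (hj : d j ≠ d p) => by
          simp [flatten, hj]
      have hw : CentralizerRel (diagonal d) w (flatten w) :=
        centralizerRel_of_eqOn_compl_fiber (p := q) hq (by simp [flatten, hqp])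
          fun j (hj : d j ≠ d q) => by simp [flatten, hqp ▸ hj]
      refine hv.trans ((ih ?_ fun j hj => ?_).trans hw.symm)
      · rw [← hv.eigenvalueSupport_eq, ← hw.eigenvalueSupport_eq, hvw]
      · by_cases hjp : d j = d p
        · simp [flatten, hjp]
        · simp [flatten, hjp, hoff (by simpa [hjp] using hj : d j ∉ insert (d p) T)]
    · refine ih hvw fun j hj => ?_
      by_cases hjc : d j = c
      · have hvj : v j = 0 := by_contra fun h => hc ⟨j, h, hjc⟩
        have hwj : w j = 0 := by_contra fun h => (hvw ▸ hc) ⟨j, h, hjc⟩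
        rw [hvj, hwj]
      · exact hoff (by simpa [hjc] using hj : d j ∉ insert c T)

theorem centralizerRel_diagonal_iff {d v w : n → K} :
    CentralizerRel (diagonal d) v w ↔ eigenvalueSupport d v = eigenvalueSupport d w := by
  classical
  exact ⟨CentralizerRel.eigenvalueSupport_eq, fun h =>
    centralizerRel_of_eigenvalueSupport_eq_of_eqOn (Finset.univ.image d) h
      fun j hj => absurd (Finset.mem_image_of_mem d (Finset.mem_univ j)) hj⟩

theorem range_eigenvalueSupport_vecMul (d : n → K) (P : GL n K) :
    Set.range (fun v : {v : n → K // v ≠ 0} => eigenvalueSupport d (v.1 ᵥ* P.val))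
      = 𝒫 Set.range d \ {∅} := by
  ext S
  simp only [Set.mem_range, Set.mem_sdiff, Set.mem_powerset_iff, Set.mem_singleton_iff,
    ← Set.nonempty_iff_ne_empty]
  constructor
  · rintro ⟨⟨v, hv⟩, rfl⟩
    refine ⟨Set.image_subset_range _ _,
      Set.image_nonempty.mpr (Function.support_nonempty_iff.mpr ?_)⟩
    exact fun h0 => hv (vecMul_injective_of_isUnit P.isUnit (h0.trans (zero_vecMul _).symm))
  · rintro ⟨hS, hne⟩
    classical
    set u : n → K := (d ⁻¹' S).indicator 1
    have hu : eigenvalueSupport d u = S := by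
      simp [eigenvalueSupport, u, Set.support_indicator, Set.image_preimage_eq_of_subset hS]
    refine ⟨⟨u ᵥ* (P⁻¹).val, fun h0 => ?_⟩, by simpa [vecMul_vecMul] using hu⟩
    have hu0 : u = 0 := by simpa [vecMul_vecMul] using congrArg (· ᵥ* P.val) h0
    simp [← hu, hu0, eigenvalueSupport] at hne

end Diagonal

theorem sq_eq_one_of_eq_smul_conj {n K : Type*} [Fintype n] [DecidableEq n] [Field K]
    {A : Matrix n n K} (hA : (A * A).trace ≠ 0) {U : GL n K} {c : K}
    (h : A = c • ((U⁻¹).val * A * U.val)) : c ^ 2 = 1 := by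
  have hsq : A * A = c ^ 2 • ((U⁻¹).val * (A * A) * U.val) := by
    conv_lhs => rw [h]
    simp [smul_smul, sq, mul_assoc]
  have htr : (A * A).trace = c ^ 2 * (A * A).trace := by
    conv_lhs => rw [hsq]
    rw [trace_smul, trace_mul_cycle, ← mul_assoc, Units.mul_inv, one_mul, smul_eq_mul]
  exact (mul_eq_right₀ hA).mp htr.symm

open scoped ComplexOrder in
theorem trace_mul_self_ne_zero_of_conjTranspose_eq_neg {n : Type*} [Fintype n]
    {D : Matrix n n ℂ} (hD0 : D ≠ 0) (hah : Dᴴ = -D) : (D * D).trace ≠ 0 := by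
  rw [show D * D = -(Dᴴ * D) by rw [hah, neg_mul, neg_neg], trace_neg, neg_ne_zero, Ne,
    trace_conjTranspose_mul_self_eq_zero_iff]
  exact hD0

theorem exists_conj_eq_diagonal_of_conjTranspose_eq_neg {n : Type*} [Fintype n] [DecidableEq n]
    {D : Matrix n n ℂ} (hah : Dᴴ = -D) :
    ∃ (P : GL n ℂ) (d : n → ℂ), (P⁻¹).val * D * P.val = diagonal d := by
  have hH : (Complex.I • D).IsHermitian := by
    simp [IsHermitian, conjTranspose_smul, hah]
  refine ⟨Unitary.toUnits hH.eigenvectorUnitary, fun i => -Complex.I * hH.eigenvalues i, ?_⟩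
  have h := hH.conjStarAlgAut_star_eigenvectorUnitary
  rw [Unitary.conjStarAlgAut_apply, Unitary.coe_star, star_star, Matrix.mul_smul,
    Matrix.smul_mul, ← eq_inv_smul_iff₀ Complex.I_ne_zero] at h
  change star (hH.eigenvectorUnitary : Matrix n n ℂ) * D * hH.eigenvectorUnitary = _
  rw [h, ← diagonal_smul]
  simp

end Matrix

theorem simRel_iff_centralizerRel {N : ℕ} {D : Matrix (Fin N) (Fin N) ℂ}
    (hD : (D * D).trace ≠ 0) (hnotsim : ¬ ∃ U : GL (Fin N) ℂ, -D = (U⁻¹).val * D * U.val)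
    (v w : {v : Fin N → ℂ // v ≠ 0}) :
    simRel D v w ↔ CentralizerRel D v w := by
  constructor
  · rintro ⟨U, μ, x, -, hx, hconj, hw⟩
    rcases sq_eq_one_iff.mp (sq_eq_one_of_eq_smul_conj hD hconj) with hμ | hμ
    · rw [hμ, one_smul] at hconj
      have hU : (U : Matrix (Fin N) (Fin N) ℂ) * D = D * U := by
        conv_lhs => rw [hconj]
        rw [← mul_assoc, ← mul_assoc, Units.mul_inv, one_mul]
      exact ⟨Units.mk0 x hx • U, by simpa using Commute.smul_left hU x,
        by simp [hw, hμ, vecMul_smul]⟩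
    · rw [hμ, neg_one_smul] at hconj
      exact (hnotsim ⟨U, by rw [neg_eq_iff_eq_neg]; exact hconj⟩).elim
  · rintro ⟨U, hU, hw⟩
    refine ⟨U, 1, 1, one_ne_zero, one_ne_zero, ?_, by simpa using hw⟩
    rw [Complex.ofReal_one, one_smul, mul_assoc, ← hU.eq, ← mul_assoc, Units.inv_mul, one_mul]

theorem stmt8_general {N k : ℕ} (D : Matrix (Fin N) (Fin N) ℂ)
    (hD0 : D ≠ 0) (hah : Dᴴ = -D)
    (hk : (spectrum ℂ D).ncard = k)
    (hnotsim : ¬ ∃ U : GL (Fin N) ℂ, -D = (U⁻¹).val * D * U.val) :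
    Nat.card (Quot (simRel D)) = 2 ^ k - 1 := by
  obtain ⟨P, d, hPD⟩ := exists_conj_eq_diagonal_of_conjTranspose_eq_neg hah
  have hrel (v w : {v : Fin N → ℂ // v ≠ 0}) :
      simRel D v w ↔
        eigenvalueSupport d (v.1 ᵥ* P.val) = eigenvalueSupport d (w.1 ᵥ* P.val) := by
    rw [simRel_iff_centralizerRel (trace_mul_self_ne_zero_of_conjTranspose_eq_neg hD0 hah)
      hnotsim, ← centralizerRel_conj_iff P, hPD, centralizerRel_diagonal_iff]
  have hspec : spectrum ℂ D = Set.range d := by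
    rw [← spectrum.units_conjugate' (u := P), hPD, spectrum_diagonal]
  rw [Nat.card_quot_eq_ncard_range hrel, range_eigenvalueSupport_vecMul,
    Set.ncard_sdiff_singleton_of_mem (Set.empty_subset _),
    Set.ncard_powerset _ (Set.finite_range d), ← hspec, hk]

/-- If `D` is a nonzero trace-free anti-hermitian matrix with exactly `k`
distinct eigenvalues which is not similar to `-D`, then `~_D` has exactly `2^k - 1`
equivalence classes. -/
theorem stmt8 {N k : ℕ} (hN : 1 ≤ N) (D : Matrix (Fin N) (Fin N) ℂ)
    (hD0 : D ≠ 0) (htr : D.trace = 0) (hah : Dᴴ = -D)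
    (hk : (spectrum ℂ D).ncard = k)
    (hnotsim : ¬ ∃ U : GL (Fin N) ℂ, -D = (U⁻¹).val * D * U.val) :
    Nat.card (Quot (simRel D)) = 2 ^ k - 1 :=
  stmt8_general D hD0 hah hk hnotsim
end

section
/- Let D ∈ Mat_N be a nonzero trace-free anti-hermitian matrix with exactly k distinct eigenvalues, where k is even, and suppose D is similar to −D. Then the number of equivalence classes of the relation ~_D on the set of nonzero row vectors of ℂ^N equals 2^{k/2−1}·(1 + 2^{k/2}) − 1. -/
open Matrix

/-!
Diagonalise `D = P (diagonal d) P⁻¹`, which is possible since `I • D` is hermitian; conjugation by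
`P` identifies the classes of `~_D` with those of `~_{diagonal d}`. For the diagonal matrix, a
relation `diagonal d = μ U⁻¹ (diagonal d) U` gives `μ • spec = spec`; the spectrum is finite,
symmetric under negation and (as `k` is even) avoids `0`, so `μ = ±1`. The matrix `U` then
multiplies by `μ` the set of eigenvalues on whose eigenspaces `v` has a nonzero component, while
the invertible matrices commuting with `diagonal d` act transitively on the vectors with a given
such set. Hence the classes are the nonempty subsets of the spectrum up to negation, and counting
orbits of the involution `T ↦ -T` (Burnside) gives `(2^k + 2^{k/2}) / 2 - 1` of them.
-/

open Function Set
open scoped Pointwise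

theorem Nat.card_set {α : Type*} [Finite α] : Nat.card (Set α) = 2 ^ Nat.card α := by
  classical
  have := Fintype.ofFinite α
  rw [Nat.card_eq_fintype_card, Fintype.card_set, Nat.card_eq_fintype_card]

theorem Nat.card_quot_eq_of_surjective {α β : Type*} {r : α → α → Prop} {f : α → β}
    (hf : Surjective f) (hr : ∀ a b, r a b ↔ f a = f b) : Nat.card (Quot r) = Nat.card β :=
  Nat.card_congr ((Quot.congrRight hr).trans (Setoid.quotientKerEquivOfSurjective f hf))

theorem Nat.card_subtype_ne_add_one {α : Type*} [Finite α] (a : α) :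
    Nat.card {b // b ≠ a} + 1 = Nat.card α := by
  classical
  have := Fintype.ofFinite α
  have := Fintype.card_pos_iff.mpr ⟨a⟩
  rw [Nat.card_eq_fintype_card, Fintype.card_subtype_compl, Fintype.card_subtype_eq,
    Nat.card_eq_fintype_card]
  omega

section Involution

variable {α : Type*} {σ : α → α}

def Function.Involutive.orbitSetoid (hσ : Involutive σ) : Setoid α where
  r a b := b = a ∨ b = σ a
  iseqv :=
    { refl _ := .inl rfl
      symm := by rintro a b (rfl | rfl) <;> simp [hσ _]
      trans := by rintro a b c (rfl | rfl) (rfl | rfl) <;> simp [hσ _] }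

theorem Function.Involutive.mk_eq_mk_iff (hσ : Involutive σ) {a b : α} :
    (⟦a⟧ : Quotient hσ.orbitSetoid) = ⟦b⟧ ↔ b = a ∨ b = σ a :=
  Quotient.eq

open Finset in
theorem Function.Involutive.two_mul_card_quotient [Finite α] (hσ : Involutive σ) :
    2 * Nat.card (Quotient hσ.orbitSetoid) = Nat.card α + Nat.card (fixedPoints σ) := by
  classical
  have := Fintype.ofFinite α
  let π : α → Quotient hσ.orbitSetoid := Quotient.mk _
  have hfiber (a : α) : ({b | π b = π a} : Finset α) = {a, σ a} := by
    ext b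
    simp only [π, Finset.mem_filter, Finset.mem_univ, true_and, hσ.mk_eq_mk_iff,
      Finset.mem_insert, Finset.mem_singleton]
    rw [eq_comm (a := a) (b := σ b), hσ.eq_iff, eq_comm (a := a)]
  have hfiber_card (q) : #{b | π b = q} + #{b | π b = q ∧ σ b = b} = 2 := by
    induction q using Quotient.inductionOn with
    | h a =>
      rw [← Finset.filter_filter, show ⟦a⟧ = π a from rfl, hfiber]
      by_cases ha : σ a = a
      · simp [ha, Finset.filter_singleton]
      · have : σ (σ a) ≠ σ a := by rw [hσ]; exact Ne.symm ha
        simp [ha, this, Finset.card_pair (Ne.symm ha)]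
  have hα : Nat.card α = ∑ q, #{b | π b = q} := by
    rw [Nat.card_eq_fintype_card, ← Finset.card_univ]
    exact Finset.card_eq_sum_card_fiberwise (by simp)
  have hfix : Nat.card (fixedPoints σ) = ∑ q, #{b | π b = q ∧ σ b = b} := by
    rw [Nat.card_eq_card_toFinset, Finset.card_eq_sum_card_fiberwise (f := π) (t := univ)
      (by simp)]
    refine Finset.sum_congr rfl fun q _ => congrArg card ?_
    ext b
    simp [IsFixedPt, and_comm]
  rw [hα, hfix, ← Finset.sum_add_distrib, Finset.sum_congr rfl fun q _ => hfiber_card q,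
    Finset.sum_const, Finset.card_univ, Nat.card_eq_fintype_card, smul_eq_mul, mul_comm]

theorem Function.Involutive.card_fixedPoints_preimage [Finite α] (hσ : Involutive σ) :
    Nat.card (fixedPoints (preimage σ)) = 2 ^ Nat.card (Quotient hσ.orbitSetoid) := by
  classical
  let π : α → Quotient hσ.orbitSetoid := Quotient.mk _
  have hπσ (a : α) : π (σ a) = π a := hσ.mk_eq_mk_iff.mpr (.inr (hσ a).symm)
  let e : Set (Quotient hσ.orbitSetoid) ≃ fixedPoints (preimage σ) :=
    { toFun Q := ⟨π ⁻¹' Q, by ext a; simp [hπσ]⟩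
      invFun A := π '' A
      left_inv Q := image_preimage_eq Q Quotient.mk_surjective
      right_inv := by
        rintro ⟨A, hA⟩
        refine Subtype.ext (subset_antisymm ?_ (subset_preimage_image π A))
        rintro a ⟨b, hb, hba⟩
        rcases hσ.mk_eq_mk_iff.mp hba with rfl | rfl
        · exact hb
        · exact (show b ∈ σ ⁻¹' A from hA.eq.symm ▸ hb) }
  rw [← Nat.card_congr e, Nat.card_set]

theorem Function.Involutive.two_mul_card_quotient_of_forall_ne [Finite α] (hσ : Involutive σ)
    (hfree : ∀ a, σ a ≠ a) : 2 * Nat.card (Quotient hσ.orbitSetoid) = Nat.card α := by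
  have : fixedPoints σ = ∅ := eq_empty_of_forall_notMem hfree
  simpa [this] using hσ.two_mul_card_quotient

theorem Function.Involutive.forall_ne_of_even_card [Finite α] (hσ : Involutive σ)
    (heven : Even (Nat.card α)) (hsub : (fixedPoints σ).Subsingleton) (a : α) : σ a ≠ a := by
  have hle : Nat.card (fixedPoints σ) ≤ 1 := Finite.card_le_one_iff_subsingleton.mpr hsub.coe_sort
  have h := hσ.two_mul_card_quotient
  have hzero : Nat.card (fixedPoints σ) = 0 := by
    obtain ⟨m, hm⟩ := heven; omega
  intro ha
  exact (Finite.card_eq_zero_iff.mp hzero).false ⟨a, ha⟩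

theorem Function.Involutive.two_mul_card_quotient_preimage [Finite α] (hσ : Involutive σ)
    (hfree : ∀ a, σ a ≠ a) :
    2 * Nat.card (Quotient hσ.preimage.orbitSetoid) = 2 ^ Nat.card α + 2 ^ (Nat.card α / 2) := by
  rw [hσ.preimage.two_mul_card_quotient, hσ.card_fixedPoints_preimage, Nat.card_set,
    ← hσ.two_mul_card_quotient_of_forall_ne hfree, Nat.mul_div_cancel_left _ two_pos]

theorem Function.Involutive.mapsTo_restrict {s : Set α} (hσ : Involutive σ) (h : MapsTo σ s s) :
    Involutive (h.restrict σ s s) :=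
  fun a => Subtype.ext (hσ a)

end Involution

/-- `p j` is a pivot of the block `{i | d i = d j}`: an index there at which `v` is nonzero,
if there is one. -/
theorem exists_pivot {ι β M : Type*} [Zero M] (d : ι → β) (v : ι → M) :
    ∃ p : ι → ι, ∀ j, d (p j) = d j ∧ p (p j) = p j ∧
      (v (p j) = 0 → ∀ i, d i = d j → v i = 0) := by
  classical
  cases isEmpty_or_nonempty ι
  · exact ⟨id, isEmptyElim⟩
  let q : β → ι := fun c => if h : ∃ i, d i = c ∧ v i ≠ 0 then h.choose else invFun d c
  have hq (j : ι) : d (q (d j)) = d j ∧ (v (q (d j)) = 0 → ∀ i, d i = d j → v i = 0) := by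
    by_cases h : ∃ i, d i = d j ∧ v i ≠ 0
    · simp only [q, dif_pos h]
      exact ⟨h.choose_spec.1, fun h0 => absurd h0 h.choose_spec.2⟩
    · simp only [q, dif_neg h]
      simp only [not_exists, not_and, not_not] at h
      exact ⟨invFun_eq ⟨j, rfl⟩, fun _ => h⟩
  exact ⟨q ∘ d, fun j => ⟨(hq j).1, by simp only [Function.comp_apply, (hq j).1], (hq j).2⟩⟩

section EigenSupport

variable {ι K : Type*} [Field K]

/-- The eigenvalues of `diagonal d` on whose eigenspaces the row vector `v` has a nonzero
component. -/
def eigenSupport (d v : ι → K) : Set K := d '' {j | v j ≠ 0}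

theorem eigenSupport_subset_range (d v : ι → K) : eigenSupport d v ⊆ range d :=
  image_subset_range _ _

theorem eigenSupport_nonempty (d : ι → K) {v : ι → K} (hv : v ≠ 0) :
    (eigenSupport d v).Nonempty :=
  let ⟨j, hj⟩ := Function.ne_iff.mp hv
  ⟨d j, j, hj, rfl⟩

theorem eigenSupport_smul (d v : ι → K) {c : K} (hc : c ≠ 0) :
    eigenSupport d (c • v) = eigenSupport d v := by
  simp [eigenSupport, hc]

theorem eigenSupport_smul_left (c : K) (d v : ι → K) :
    eigenSupport (c • d) v = c • eigenSupport d v := by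
  simp only [eigenSupport, ← image_smul, image_image]
  rfl

theorem eigenSupport_indicator (d : ι → K) (T : Set K) :
    eigenSupport d ((d ⁻¹' T).indicator 1) = T ∩ range d := by
  ext c
  constructor
  · rintro ⟨j, hj, rfl⟩
    exact ⟨by simpa using hj, j, rfl⟩
  · rintro ⟨hc, j, rfl⟩
    exact ⟨j, by simpa using hc, rfl⟩

variable [Fintype ι] [DecidableEq ι]

theorem Matrix.semiconjBy_diagonal_iff {d₁ d₂ : ι → K} {U : Matrix ι ι K} :
    SemiconjBy U (diagonal d₂) (diagonal d₁) ↔ ∀ i j, U i j ≠ 0 → d₁ i = d₂ j := by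
  simp only [SemiconjBy, ← Matrix.ext_iff, mul_diagonal, diagonal_mul, mul_comm (U _ _),
    mul_eq_mul_right_iff]
  exact forall₂_congr fun i j => by rw [or_iff_not_imp_right, eq_comm (a := d₂ j)]

theorem eigenSupport_vecMul_subset {d₁ d₂ : ι → K} {U : Matrix ι ι K}
    (h : SemiconjBy U (diagonal d₂) (diagonal d₁)) (v : ι → K) :
    eigenSupport d₂ (v ᵥ* U) ⊆ eigenSupport d₁ v := by
  rintro _ ⟨j, hj, rfl⟩
  obtain ⟨i, -, hi⟩ := Finset.exists_ne_zero_of_sum_ne_zero hj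
  exact ⟨i, left_ne_zero_of_mul hi, semiconjBy_diagonal_iff.mp h i j (right_ne_zero_of_mul hi)⟩

theorem eigenSupport_vecMul {d₁ d₂ : ι → K} {U : GL ι K}
    (h : SemiconjBy (U : Matrix ι ι K) (diagonal d₂) (diagonal d₁)) (v : ι → K) :
    eigenSupport d₂ (v ᵥ* U) = eigenSupport d₁ v := by
  refine (eigenSupport_vecMul_subset h v).antisymm ?_
  simpa [vecMul_vecMul] using eigenSupport_vecMul_subset h.units_inv_symm_left (v ᵥ* U)

theorem eigenSupport_vecMul_of_semiconjBy_smul {d : ι → K} {U : GL ι K} {μ : K}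
    (h : SemiconjBy (U : Matrix ι ι K) (diagonal d) (μ • diagonal d)) (v : ι → K) :
    eigenSupport d (v ᵥ* U) = μ • eigenSupport d v := by
  rw [← diagonal_smul] at h
  rw [eigenSupport_vecMul h, eigenSupport_smul_left]

theorem vecMul_units_ne_zero {v : ι → K} (hv : v ≠ 0) (P : GL ι K) : v ᵥ* (P : Matrix ι ι K) ≠ 0 :=
  fun h => hv (by rw [← vecMul_one v, ← Units.mul_inv P, ← vecMul_vecMul, h, zero_vecMul])

def vecMulEquiv (P : GL ι K) : {v : ι → K // v ≠ 0} ≃ {v : ι → K // v ≠ 0} where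
  toFun v := ⟨v ᵥ* (P : Matrix ι ι K), vecMul_units_ne_zero v.2 P⟩
  invFun v := ⟨v ᵥ* ((P⁻¹ : GL ι K) : Matrix ι ι K), vecMul_units_ne_zero v.2 P⁻¹⟩
  left_inv v := Subtype.ext <| (vecMul_vecMul _ _ _).trans (by rw [Units.mul_inv, vecMul_one])
  right_inv v := Subtype.ext <| (vecMul_vecMul _ _ _).trans (by rw [Units.inv_mul, vecMul_one])

theorem vecMulEquiv_inv_apply (P : GL ι K) (v : {v : ι → K // v ≠ 0}) :
    vecMulEquiv P⁻¹ (vecMulEquiv P v) = v :=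
  (vecMulEquiv P).symm_apply_apply v

theorem exists_isUnit_commute_vecMul_eq_comp {d v : ι → K} {p : ι → ι}
    (hd : ∀ j, d (p j) = d j) (hp : ∀ j, p (p j) = p j) (hv : ∀ j, v (p j) = 0 → v j = 0) :
    ∃ U : Matrix ι ι K, IsUnit U ∧ Commute U (diagonal d) ∧ v ᵥ* U = v ∘ p := by
  let c : ι → K := fun j => if p j = j then 0 else (v (p j) - v j) / v (p j)
  let E : Matrix ι ι K := of fun i j => if i = p j then c j else 0
  -- `E` lives on pivot rows and non-pivot columns, so `E * E = 0`;
  -- `c` is chosen so that `v ᵥ* (1 + E) = v ∘ p`.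
  have hE : E * E = 0 := by
    ext i j
    refine Finset.sum_eq_zero fun m _ => ?_
    by_cases him : i = p m
    · by_cases hmj : m = p j
      · simp [E, c, him, hmj, hp]
      · simp [E, hmj]
    · simp [E, him]
  refine ⟨1 + E, IsNilpotent.isUnit_one_add ⟨2, by rw [sq, hE]⟩, ?_, ?_⟩
  · refine (Commute.one_left _).add_left (semiconjBy_diagonal_iff.mpr fun i j hij => ?_)
    by_cases h : i = p j
    · rw [h, hd]
    · simp [E, h] at hij
  · ext j
    have hvE : (v ᵥ* E) j = v (p j) * c j := by
      simp [E, vecMul, dotProduct]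
    rw [vecMul_add, vecMul_one, Pi.add_apply, hvE, Function.comp_apply]
    by_cases hpj : p j = j
    · simp [c, hpj]
    by_cases hv0 : v (p j) = 0
    · simp [hv0, hv j hv0]
    · simp only [c, if_neg hpj]
      field_simp
      ring

theorem exists_commute_vecMul_eq_indicator (d v : ι → K) :
    ∃ U : GL ι K, Commute (U : Matrix ι ι K) (diagonal d) ∧
      v ᵥ* U = (d ⁻¹' eigenSupport d v).indicator 1 := by
  classical
  obtain ⟨p, hp⟩ := exists_pivot d v
  have hsupp (j : ι) : d j ∈ eigenSupport d v ↔ v (p j) ≠ 0 := by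
    refine ⟨?_, fun h => ⟨p j, h, (hp j).1⟩⟩
    rintro ⟨i, hi, hij⟩ h0
    exact hi ((hp j).2.2 h0 i hij)
  obtain ⟨U, hU, hUd, hUv⟩ := exists_isUnit_commute_vecMul_eq_comp (fun j => (hp j).1)
    (fun j => (hp j).2.1) (fun j h => (hp j).2.2 h j rfl)
  let g : ι → K := fun j => if v (p j) = 0 then 1 else (v (p j))⁻¹
  have hg : IsUnit (diagonal g) :=
    isUnit_diagonal.mpr (Pi.isUnit_iff.mpr fun j => by by_cases h : v (p j) = 0 <;> simp [g, h])
  refine ⟨(hU.mul hg).unit, ?_, ?_⟩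
  · exact hUd.mul_left (commute_diagonal g d)
  · ext j
    rw [IsUnit.unit_spec, ← vecMul_vecMul, hUv, vecMul_diagonal]
    by_cases h : v (p j) = 0 <;> simp [g, h, hsupp]

theorem exists_commute_vecMul_eq {d v w : ι → K} (h : eigenSupport d v = eigenSupport d w) :
    ∃ U : GL ι K, Commute (U : Matrix ι ι K) (diagonal d) ∧ v ᵥ* U = w := by
  obtain ⟨U, hU, hv⟩ := exists_commute_vecMul_eq_indicator d v
  obtain ⟨V, hV, hw⟩ := exists_commute_vecMul_eq_indicator d w
  refine ⟨U * V⁻¹, hU.mul_left hV.units_inv_left, ?_⟩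
  rw [Units.val_mul, ← vecMul_vecMul, hv, h, ← hw, vecMul_vecMul, Units.mul_inv, vecMul_one]

end EigenSupport

theorem eq_smul_units_conj_iff {𝕜 A : Type*} [CommSemiring 𝕜] [Semiring A] [Algebra 𝕜 A] {a : A}
    {u : Aˣ} {μ : 𝕜} : a = μ • (↑u⁻¹ * a * ↑u) ↔ SemiconjBy (↑u) a (μ • a) := by
  rw [← Units.mul_right_inj u, mul_smul_comm, ← mul_assoc, ← mul_assoc, Units.mul_inv, one_mul,
    ← smul_mul_assoc]
  rfl

theorem SemiconjBy.units_conj_iff {M : Type*} [Monoid M] {P : Mˣ} {u a a' b b' : M}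
    (ha : SemiconjBy (↑P) a' a) (hb : SemiconjBy (↑P) b' b) :
    SemiconjBy (↑P⁻¹ * u * ↑P) a' b' ↔ SemiconjBy u a b := by
  refine ⟨fun h => ?_, fun h => (hb.units_inv_symm_left.mul_left h).mul_left ha⟩
  simpa [mul_assoc] using (hb.mul_left h).mul_left ha.units_inv_symm_left

theorem SemiconjBy.spectrum_eq {R A : Type*} [CommSemiring R] [Ring A] [Algebra R A] {a b : A}
    {u : Aˣ} (h : SemiconjBy (↑u) a b) : spectrum R a = spectrum R b := by
  rw [show b = ↑u * a * ↑u⁻¹ by rw [h.eq, Units.mul_inv_cancel_right], spectrum.units_conjugate]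

theorem spectrum_smul_eq_of_semiconjBy {𝕜 A : Type*} [Field 𝕜] [Ring A] [Algebra 𝕜 A] {a : A}
    {u : Aˣ} {μ : 𝕜} (hμ : μ ≠ 0) (h : SemiconjBy (↑u) a (μ • a)) :
    μ • spectrum 𝕜 a = spectrum 𝕜 a :=
  (spectrum.unit_smul_eq_smul a (Units.mk0 μ hμ)).symm.trans h.spectrum_eq.symm

theorem norm_eq_one_of_smul_set_eq {𝕜 : Type*} [NormedField 𝕜] {S : Set 𝕜} (hS : S.Finite)
    (hne : S.Nonempty) (h0 : (0 : 𝕜) ∉ S) {μ : 𝕜} (h : μ • S = S) : ‖μ‖ = 1 := by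
  obtain ⟨c, hc, hmax⟩ := exists_max_image S (‖·‖) hS hne
  have hpos {b : 𝕜} (hb : b ∈ S) : 0 < ‖b‖ := norm_pos_iff.mpr (ne_of_mem_of_not_mem hb h0)
  apply le_antisymm
  · have := hmax (μ • c) (h ▸ smul_mem_smul_set hc)
    rw [norm_smul] at this
    exact le_of_mul_le_mul_right (by rwa [one_mul]) (hpos hc)
  · obtain ⟨b, hb, rfl⟩ : c ∈ μ • S := h.symm ▸ hc
    have := hmax b hb
    rw [norm_smul] at this
    exact le_of_mul_le_mul_right (by rwa [one_mul]) (hpos hb)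

theorem exists_semiconjBy_diagonal_of_conjTranspose_eq_neg {n : Type*} [Fintype n] [DecidableEq n]
    {D : Matrix n n ℂ} (hD : Dᴴ = -D) :
    ∃ (P : GL n ℂ) (d : n → ℂ), SemiconjBy (P : Matrix n n ℂ) (diagonal d) D := by
  have hA : (Complex.I • D).IsHermitian := by
    rw [IsHermitian, conjTranspose_smul, hD, Complex.star_def, Complex.conj_I, smul_neg, neg_smul,
      neg_neg]
  refine ⟨Unitary.toUnits hA.eigenvectorUnitary, -Complex.I • (RCLike.ofReal ∘ hA.eigenvalues), ?_⟩
  have hspec := hA.spectral_theorem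
  rw [Unitary.conjStarAlgAut_apply] at hspec
  generalize hA.eigenvectorUnitary = V, hA.eigenvalues = r at hspec ⊢
  have hD' : D = -Complex.I • (Complex.I • D) := by rw [smul_smul]; simp
  rw [SemiconjBy, hD', hspec, diagonal_smul]
  simp [mul_assoc]

section SimRel

variable {N : ℕ}

theorem simRel_vecMulEquiv {D D' : Matrix (Fin N) (Fin N) ℂ} {P : GL (Fin N) ℂ}
    (hP : SemiconjBy (↑P) D' D) {v w : {v : Fin N → ℂ // v ≠ 0}} (h : simRel D v w) :
    simRel D' (vecMulEquiv P v) (vecMulEquiv P w) := by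
  obtain ⟨U, μ, x, hμ, hx, hD, hw⟩ := h
  refine ⟨P⁻¹ * U * P, μ, x, hμ, hx, ?_, ?_⟩
  · rw [eq_smul_units_conj_iff] at hD ⊢
    simpa using (SemiconjBy.units_conj_iff hP (hP.smul_right (μ : ℂ))).mpr hD
  · change (w : Fin N → ℂ) ᵥ* (P : Matrix (Fin N) (Fin N) ℂ) =
      _ • ((v : Fin N → ℂ) ᵥ* (P : Matrix (Fin N) (Fin N) ℂ)) ᵥ* _
    rw [Units.val_mul, Units.val_mul, vecMul_vecMul, ← mul_assoc, ← mul_assoc, Units.mul_inv,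
      one_mul, hw, smul_vecMul, vecMul_vecMul]

theorem card_quot_simRel_eq_of_semiconjBy {D D' : Matrix (Fin N) (Fin N) ℂ} {P : GL (Fin N) ℂ}
    (hP : SemiconjBy (↑P) D' D) : Nat.card (Quot (simRel D)) = Nat.card (Quot (simRel D')) :=
  Nat.card_congr <| Quot.congr (vecMulEquiv P) fun _ _ =>
    ⟨simRel_vecMulEquiv hP, fun h => by
      simpa only [vecMulEquiv_inv_apply] using simRel_vecMulEquiv hP.units_inv_symm_left h⟩

theorem simRel_of_semiconjBy {D : Matrix (Fin N) (Fin N) ℂ} {U : GL (Fin N) ℂ} {μ : ℝ}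
    (hμ : μ ≠ 0) (hU : SemiconjBy (↑U) D ((μ : ℂ) • D)) {v w : {v : Fin N → ℂ // v ≠ 0}}
    (hw : (w : Fin N → ℂ) = (v : Fin N → ℂ) ᵥ* (U : Matrix (Fin N) (Fin N) ℂ)) :
    simRel D v w := by
  have hμ' : (μ : ℂ) ≠ 0 := by exact_mod_cast hμ
  exact ⟨U, μ, (μ : ℂ)⁻¹, hμ, inv_ne_zero hμ', eq_smul_units_conj_iff.mpr hU,
    by rw [hw, mul_inv_cancel₀ hμ', one_smul]⟩

theorem simRel_diagonal_iff {d : Fin N → ℂ} (h0 : (0 : ℂ) ∉ range d) {U₀ : GL (Fin N) ℂ}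
    (hU₀ : SemiconjBy (U₀ : Matrix (Fin N) (Fin N) ℂ) (diagonal d) (-diagonal d))
    {v w : {v : Fin N → ℂ // v ≠ 0}} :
    simRel (diagonal d) v w ↔
      eigenSupport d w = eigenSupport d v ∨ eigenSupport d w = -eigenSupport d v := by
  constructor
  · rintro ⟨U, μ, x, hμ, hx, hD, hw⟩
    rw [eq_smul_units_conj_iff] at hD
    have hμ' : (μ : ℂ) ≠ 0 := by exact_mod_cast hμ
    have hrange := spectrum_smul_eq_of_semiconjBy hμ' hD
    rw [spectrum_diagonal] at hrange
    have hnorm := norm_eq_one_of_smul_set_eq (finite_range d)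
      ((eigenSupport_nonempty d v.2).mono (eigenSupport_subset_range d v)) h0 hrange
    rw [Complex.norm_real, Real.norm_eq_abs] at hnorm
    rw [hw, eigenSupport_smul _ _ (mul_ne_zero hμ' hx),
      eigenSupport_vecMul_of_semiconjBy_smul hD]
    rcases (abs_eq zero_le_one).mp hnorm with rfl | rfl <;> simp
  · rintro (h | h)
    · obtain ⟨U, hU, hvw⟩ := exists_commute_vecMul_eq h.symm
      exact simRel_of_semiconjBy one_ne_zero (by rwa [Complex.ofReal_one, one_smul]) hvw.symm
    · have hvU₀ : eigenSupport d ((v : Fin N → ℂ) ᵥ* (U₀ : Matrix (Fin N) (Fin N) ℂ)) =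
          eigenSupport d w := by
        rw [h, eigenSupport_vecMul_of_semiconjBy_smul (μ := -1) (by simpa using hU₀)]
        simp
      obtain ⟨V, hV, hvw⟩ := exists_commute_vecMul_eq hvU₀
      refine simRel_of_semiconjBy (U := U₀ * V) (μ := -1) (by norm_num) ?_ ?_
      · simpa using hU₀.mul_left hV
      · rw [← hvw, Units.val_mul, vecMul_vecMul]

/-- The `+ 1` is the orbit of `∅`, which is not the eigen-support of a nonzero vector. -/
theorem card_quot_simRel_diagonal_add_one {d : Fin N → ℂ}
    (hneg : MapsTo Neg.neg (range d) (range d)) (h0 : (0 : ℂ) ∉ range d) {U₀ : GL (Fin N) ℂ}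
    (hU₀ : SemiconjBy (U₀ : Matrix (Fin N) (Fin N) ℂ) (diagonal d) (-diagonal d)) :
    Nat.card (Quot (simRel (diagonal d))) + 1 =
      Nat.card (Quotient (neg_involutive.mapsTo_restrict hneg).preimage.orbitSetoid) := by
  set hσ := (neg_involutive.mapsTo_restrict hneg).preimage
  have hval_inj {T T' : Set ℂ} (hT : T ⊆ range d) (hT' : T' ⊆ range d) :
      (Subtype.val ⁻¹' T : Set (range d)) = Subtype.val ⁻¹' T' ↔ T = T' := by
    rw [Subtype.preimage_coe_eq_preimage_coe_iff, inter_eq_right.mpr hT, inter_eq_right.mpr hT']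
  have hneg_subset (v : Fin N → ℂ) : -eigenSupport d v ⊆ range d := fun c hc => by
    simpa using hneg (eigenSupport_subset_range d v hc)
  have hempty {B : Set (range d)} : (⟦B⟧ : Quotient hσ.orbitSetoid) = ⟦∅⟧ → B = ∅ := by
    rw [hσ.mk_eq_mk_iff]
    rintro (h | h)
    · exact h.symm
    · rw [← (neg_involutive.mapsTo_restrict hneg).preimage B, ← h, preimage_empty]
  let F (v : {v : Fin N → ℂ // v ≠ 0}) : {q : Quotient hσ.orbitSetoid // q ≠ ⟦∅⟧} :=
    ⟨⟦Subtype.val ⁻¹' eigenSupport d v⟧, fun h => by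
      obtain ⟨c, hc⟩ := eigenSupport_nonempty d v.2
      exact (eq_empty_iff_forall_notMem.mp (hempty h)) ⟨c, eigenSupport_subset_range d v hc⟩ hc⟩
  rw [Nat.card_quot_eq_of_surjective (f := F) ?_ ?_, Nat.card_subtype_ne_add_one]
  · rintro ⟨q, hq⟩
    induction q using Quotient.inductionOn with | h B => ?_
    obtain ⟨⟨_, j, rfl⟩, hj⟩ := (nonempty_iff_ne_empty (s := B)).mpr fun h => hq (by rw [h])
    let v := (d ⁻¹' (Subtype.val '' B)).indicator (1 : Fin N → ℂ)
    have hv : v ≠ 0 := fun h => by simpa [v, hj] using congrFun h j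
    refine ⟨⟨v, hv⟩, Subtype.ext (congrArg (Quotient.mk _) ?_)⟩
    change Subtype.val ⁻¹' eigenSupport d v = B
    rw [eigenSupport_indicator, inter_eq_left.mpr (Subtype.coe_image_subset _ B),
      preimage_image_eq B Subtype.val_injective]
  · intro v w
    rw [simRel_diagonal_iff h0 hU₀, Subtype.ext_iff, hσ.mk_eq_mk_iff]
    exact or_congr (hval_inj (eigenSupport_subset_range d w) (eigenSupport_subset_range d v)).symm
      (hval_inj (eigenSupport_subset_range d w) (hneg_subset v)).symm

theorem card_quot_simRel_diagonal (hN : 1 ≤ N) {d : Fin N → ℂ} {U₀ : GL (Fin N) ℂ}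
    (hU₀ : SemiconjBy (U₀ : Matrix (Fin N) (Fin N) ℂ) (diagonal d) (-diagonal d))
    (heven : Even (range d).ncard) :
    Nat.card (Quot (simRel (diagonal d))) =
      2 ^ ((range d).ncard / 2 - 1) * (1 + 2 ^ ((range d).ncard / 2)) - 1 := by
  have hrange : range d = -range d := by
    have := hU₀.spectrum_eq (R := ℂ)
    rwa [← spectrum.neg_eq, spectrum_diagonal] at this
  have hneg : MapsTo Neg.neg (range d) (range d) := fun c hc => mem_neg.mp (hrange ▸ hc)
  have hσ := neg_involutive.mapsTo_restrict hneg
  -- negation fixes at most `0` on the spectrum, and `k` is even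
  have hfree := hσ.forall_ne_of_even_card (by rwa [Nat.card_coe_set_eq])
    fun a ha b hb => Subtype.ext <| (self_eq_neg.mp (congrArg Subtype.val ha).symm).trans
      (self_eq_neg.mp (congrArg Subtype.val hb).symm).symm
  have h0 : (0 : ℂ) ∉ range d := fun h => hfree ⟨0, h⟩ (Subtype.ext neg_zero)
  have hcount := hσ.two_mul_card_quotient_preimage hfree
  have hcard := card_quot_simRel_diagonal_add_one hneg h0 hU₀
  have hpos : 0 < (range d).ncard :=
    (ncard_pos (finite_range d)).mpr (range_nonempty_iff_nonempty.mpr ⟨⟨0, hN⟩⟩)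
  rw [Nat.card_coe_set_eq] at hcount
  obtain ⟨m, hm⟩ := heven
  rw [hm, show (m + m) / 2 = m by omega] at hcount ⊢
  obtain ⟨n, rfl⟩ : ∃ n, m = n + 1 := ⟨m - 1, by omega⟩
  have : 2 * (2 ^ n * (1 + 2 ^ (n + 1))) = 2 ^ (n + 1 + (n + 1)) + 2 ^ (n + 1) := by ring
  rw [Nat.add_sub_cancel]
  omega

end SimRel

theorem stmt10_general {N k : ℕ} (hN : 1 ≤ N) (D : Matrix (Fin N) (Fin N) ℂ)
    (hah : Dᴴ = -D)
    (hk : (spectrum ℂ D).ncard = k)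
    (hkeven : Even k)
    (hsim : ∃ U : GL (Fin N) ℂ, -D = (U⁻¹).val * D * U.val) :
    Nat.card (Quot (simRel D)) = 2 ^ (k / 2 - 1) * (1 + 2 ^ (k / 2)) - 1 := by
  obtain ⟨P, d, hP⟩ := exists_semiconjBy_diagonal_of_conjTranspose_eq_neg hah
  obtain ⟨U₀, hU₀⟩ := hsim
  have hspec : spectrum ℂ D = range d := by rw [← hP.spectrum_eq, spectrum_diagonal]
  have hU₀D : SemiconjBy (U₀ : Matrix (Fin N) (Fin N) ℂ) D (-D) := by
    simpa using (eq_smul_units_conj_iff (a := D) (u := U₀) (μ := (-1 : ℂ))).mp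
      (by rw [neg_one_smul, ← hU₀, neg_neg])
  have hU₀d : SemiconjBy ((P⁻¹ * U₀ * P : GL (Fin N) ℂ) : Matrix (Fin N) (Fin N) ℂ) (diagonal d)
      (-diagonal d) := by
    rw [Units.val_mul, Units.val_mul]
    exact (SemiconjBy.units_conj_iff hP hP.neg_right).mpr hU₀D
  rw [← hk, hspec] at hkeven ⊢
  rw [card_quot_simRel_eq_of_semiconjBy hP]
  exact card_quot_simRel_diagonal hN hU₀d hkeven

/-- If `D` is a nonzero trace-free anti-hermitian matrix with exactly `k`
distinct eigenvalues with `k` even, similar to `-D`, then `~_D` has exactly `2^{k/2-1}(1 + 2^{k/2}) - 1`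
equivalence classes. -/
theorem stmt10 {N k : ℕ} (hN : 1 ≤ N) (D : Matrix (Fin N) (Fin N) ℂ)
    (hD0 : D ≠ 0) (htr : D.trace = 0) (hah : Dᴴ = -D)
    (hk : (spectrum ℂ D).ncard = k)
    (hkeven : Even k)
    (hsim : ∃ U : GL (Fin N) ℂ, -D = (U⁻¹).val * D * U.val) :
    Nat.card (Quot (simRel D)) = 2 ^ (k / 2 - 1) * (1 + 2 ^ (k / 2)) - 1 :=
  stmt10_general hN D hah hk hkeven hsim
end

section
/- Let N ≥ 1 and let h be a metric on the right Mat_N-module ℂ^N. Then there exists x ∈ ℝ with x ≠ 0 such that h(u,v) = x·(u†v) for all u,v ∈ ℂ^N. -/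
open Matrix

/-- Every metric `h` on the right `Mat_N`-module `ℂ^N` is of the form
`h(u,v) = x · u†v` for a nonzero real number `x`. -/
theorem stmt11 {N : ℕ} (hN : 1 ≤ N)
    (h : (Fin N → ℂ) → (Fin N → ℂ) → Matrix (Fin N) (Fin N) ℂ)
    (hadd1 : ∀ u u' v, h (u + u') v = h u v + h u' v)
    (hadd2 : ∀ u v v', h u (v + v') = h u v + h u v')
    (hmul : ∀ (u v : Fin N → ℂ) (A : Matrix (Fin N) (Fin N) ℂ),
        h u (Matrix.vecMul v A) = h u v * A)
    (hsym : ∀ u v, (h u v)ᴴ = h v u)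
    (hnd : ∀ u, (∀ v, h u v = 0) → u = 0) :
    ∃ x : ℝ, x ≠ 0 ∧ ∀ u v, h u v = (x : ℂ) • Matrix.vecMulVec (star u) v := by
  set i0 : Fin N := ⟨0, hN⟩ with hi0
  set e : Fin N → ℂ := Pi.single i0 1 with he
  set H : Matrix (Fin N) (Fin N) ℂ := h e e with hH
  -- first-argument multiplicativity
  have hmul1 : ∀ (u v : Fin N → ℂ) (A : Matrix (Fin N) (Fin N) ℂ),
      h (Matrix.vecMul u A) v = Aᴴ * h u v := by
    intro u v A
    have := congrArg Matrix.conjTranspose (hmul v u A)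
    rw [hsym] at this
    rw [this, Matrix.conjTranspose_mul, hsym]
  have hrec : ∀ u : Fin N → ℂ, Matrix.vecMul e (Matrix.vecMulVec e u) = u := by
    intro u
    ext j
    simp [Matrix.vecMul, Matrix.vecMulVec, dotProduct, he, Pi.single_apply,
      Finset.sum_ite_eq']
  have key : ∀ u v, h u v = (H i0 i0) • Matrix.vecMulVec (star u) v := by
    intro u v
    have h1 : h u v = (Matrix.vecMulVec e u)ᴴ * H * Matrix.vecMulVec e v := by
      conv_lhs => rw [← hrec u, ← hrec v, hmul, hmul1]
    rw [h1]
    ext i j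
    simp [Matrix.mul_apply, Matrix.vecMulVec, Matrix.conjTranspose_apply, he,
      Pi.single_apply, apply_ite (starRingEnd ℂ), mul_ite, ite_mul, map_zero,
      Finset.sum_ite_eq', mul_comm, mul_assoc, mul_left_comm]
  -- H i0 i0 is real
  have hreal : (starRingEnd ℂ) (H i0 i0) = H i0 i0 := by
    have := congrFun (congrFun (hsym e e) i0) i0
    simpa [Matrix.conjTranspose_apply, hH] using this
  set x : ℝ := (H i0 i0).re with hx
  have hxc : (x : ℂ) = H i0 i0 := by
    have := Complex.conj_eq_iff_re.mp hreal
    simpa [hx] using this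
  refine ⟨x, ?_, ?_⟩
  · intro hx0
    have hHz : H i0 i0 = 0 := by rw [← hxc, hx0]; simp
    have : e = 0 := by
      apply hnd
      intro v
      rw [key, hHz, zero_smul]
    have := congrFun this i0
    simp [he, Pi.single_apply] at this
  · intro u v
    rw [key, hxc]
end

section
/- Let N ≥ 1 and D̂ ∈ Mat_N. An additive map ∇ : ℂ^N → ℂ^N satisfies the Leibniz rule ∇(v·A) = ∇(v)·A + v·(D̂A − AD̂) for all v ∈ ℂ^N and A ∈ Mat_N if and only if there exists λ ∈ ℂ such that ∇(v) = λ·v − v·D̂ for all v ∈ ℂ^N. -/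
open Matrix

/-- An additive map `∇ : ℂ^N → ℂ^N` satisfies the Leibniz rule
`∇(v·A) = ∇(v)·A + v·(D̂A − AD̂)` iff `∇(v) = λ·v − v·D̂` for some `λ ∈ ℂ`. -/
theorem stmt12 {N : ℕ} (hN : 1 ≤ N) (Dh : Matrix (Fin N) (Fin N) ℂ)
    (nab : (Fin N → ℂ) → (Fin N → ℂ))
    (hadd : ∀ v w, nab (v + w) = nab v + nab w) :
    (∀ (v : Fin N → ℂ) (A : Matrix (Fin N) (Fin N) ℂ),
        nab (Matrix.vecMul v A)
          = Matrix.vecMul (nab v) A + Matrix.vecMul v (Dh * A - A * Dh))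
      ↔ ∃ lam : ℂ, ∀ v, nab v = lam • v - Matrix.vecMul v Dh := by
  constructor
  · intro h
    set Ψ : (Fin N → ℂ) → (Fin N → ℂ) := fun v => nab v + Matrix.vecMul v Dh with hΨ
    have hmul : ∀ v A, Ψ (Matrix.vecMul v A) = Matrix.vecMul (Ψ v) A := by
      intro v A
      simp only [hΨ, h v A, Matrix.vecMul_sub, Matrix.add_vecMul, ← Matrix.vecMul_vecMul]
      abel
    set i0 : Fin N := ⟨0, hN⟩ with hi0
    set e0 : Fin N → ℂ := Pi.single i0 1 with he0
    have hsingle : ∀ (w : Fin N → ℂ) (A : Matrix (Fin N) (Fin N) ℂ) (j : Fin N),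
        Matrix.vecMul (Pi.single i0 (1:ℂ)) A j = A i0 j := by
      intro w A j
      simp [Matrix.vecMul, dotProduct, Pi.single_apply]
    have hv : ∀ v : Fin N → ℂ, Matrix.vecMul e0 (Matrix.of fun _ j => v j) = v := by
      intro v
      funext j
      rw [he0, hsingle v]
      rfl
    have hstd : ∀ w : Fin N → ℂ,
        Matrix.vecMul w (Matrix.single i0 i0 1) = (w i0) • e0 := by
      intro w
      funext j
      simp [Matrix.vecMul, dotProduct, Matrix.single, he0, Pi.single_apply,
        mul_comm, eq_comm, ite_and, Finset.sum_ite_eq']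
    have he0fix : Matrix.vecMul e0 (Matrix.single i0 i0 1) = e0 := by
      rw [hstd]
      simp [he0]
    have h1 : Ψ e0 = (Ψ e0 i0) • e0 := by
      have := hmul e0 (Matrix.single i0 i0 1)
      rw [he0fix, hstd] at this
      exact this
    refine ⟨Ψ e0 i0, fun v => ?_⟩
    have h2 := hmul e0 (Matrix.of fun _ j => v j)
    rw [hv, h1, Matrix.smul_vecMul, hv] at h2
    have : nab v = Ψ v - Matrix.vecMul v Dh := by simp [hΨ]
    rw [this, h2]
  · intro ⟨lam, hlam⟩ v A
    rw [hlam, hlam]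
    funext j
    simp [Matrix.vecMul_sub, Matrix.smul_vecMul, Matrix.sub_vecMul, ← Matrix.vecMul_vecMul]
end

section
/- Let D̂ ∈ Mat_N satisfy D̂† = −D̂, let v₀ ∈ ℂ^N be a nonzero row vector, let x ∈ ℝ∖{0}, and set h_x(u,v) = x·(u†v). Then there exists a connection ∇ on ℂ^N (an additive map with ∇(v·A) = ∇(v)·A + v·(D̂A − AD̂) for all v, A) such that h_x(v₀, ∇(v₀)) is hermitian (equal to its own conjugate transpose) if and only if v₀ is a left eigenvector of D̂, i.e., v₀·D̂ = λ·v₀ for some λ ∈ ℂ. -/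
open Matrix

/-- For anti-hermitian `D̂`, nonzero `v₀ ∈ ℂ^N` and `x ∈ ℝ∖{0}` with metric
`h_x(u,v) = x·(u†v)`, there exists a connection `∇` with `h_x(v₀, ∇ v₀)` hermitian iff `v₀` is a
left eigenvector of `D̂`. -/
theorem stmt13 {N : ℕ} (hN : 1 ≤ N) (Dh : Matrix (Fin N) (Fin N) ℂ)
    (hah : Dhᴴ = -Dh) (v₀ : Fin N → ℂ) (hv₀ : v₀ ≠ 0) (x : ℝ) (hx : x ≠ 0) :
    (∃ nab : (Fin N → ℂ) → (Fin N → ℂ),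
        (∀ v w, nab (v + w) = nab v + nab w) ∧
        (∀ (v : Fin N → ℂ) (A : Matrix (Fin N) (Fin N) ℂ),
          nab (Matrix.vecMul v A)
            = Matrix.vecMul (nab v) A + Matrix.vecMul v (Dh * A - A * Dh)) ∧
        ((x : ℂ) • Matrix.vecMulVec (star v₀) (nab v₀))ᴴ
          = (x : ℂ) • Matrix.vecMulVec (star v₀) (nab v₀))
      ↔ ∃ lam : ℂ, Matrix.vecMul v₀ Dh = lam • v₀ := by
  constructor
  · rintro ⟨nab, hadd, hconn, hherm⟩
    set z : Fin N := ⟨0, hN⟩ with hz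
    set e : Fin N → ℂ := Pi.single z 1 with he
    set A : Matrix (Fin N) (Fin N) ℂ := Matrix.vecMulVec e v₀ with hA
    have hvA : Matrix.vecMul e A = v₀ := by
      ext j
      simp [hA, he, Matrix.vecMul, Matrix.vecMulVec, dotProduct, Pi.single_apply]
    have key := hconn e A
    rw [hvA] at key
    -- compute the three pieces
    have h1 : Matrix.vecMul (nab e) A = (nab e z) • v₀ := by
      ext j
      simp [hA, he, Matrix.vecMul, Matrix.vecMulVec, dotProduct, Pi.single_apply, mul_comm,
        mul_assoc]
    have h2 : Matrix.vecMul e (Dh * A) = (Dh z z) • v₀ := by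
      ext j
      simp [hA, he, Matrix.vecMul, Matrix.vecMulVec, dotProduct, Matrix.mul_apply,
        Pi.single_apply, Finset.mul_sum]
    have h3 : Matrix.vecMul e (A * Dh) = Matrix.vecMul v₀ Dh := by
      ext j
      simp [hA, he, Matrix.vecMul, Matrix.vecMulVec, dotProduct, Matrix.mul_apply,
        Pi.single_apply]
    set c : ℂ := nab e z + Dh z z with hc
    have hnab : nab v₀ = c • v₀ - Matrix.vecMul v₀ Dh := by
      rw [key, Matrix.vecMul_sub, h1, h2, h3, hc, add_smul]
      abel
    set u : Fin N → ℂ := nab v₀ with hu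
    obtain ⟨i₀, hi₀⟩ : ∃ i, v₀ i ≠ 0 := by
      by_contra h
      push_neg at h
      exact hv₀ (funext h)
    have hent : ∀ j, (x:ℂ) * (v₀ j * (starRingEnd ℂ) (u i₀)) =
        (x:ℂ) * ((starRingEnd ℂ) (v₀ i₀) * u j) := by
      intro j
      have := congrFun (congrFun hherm i₀) j
      simpa [Matrix.conjTranspose_apply, Matrix.vecMulVec_apply, mul_comm, mul_assoc,
        mul_left_comm, Complex.conj_ofReal] using this
    have hxc : (x:ℂ) ≠ 0 := by exact_mod_cast Complex.ofReal_ne_zero.mpr hx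
    have hvc : (starRingEnd ℂ) (v₀ i₀) ≠ 0 := by
      simpa using hi₀
    set μ : ℂ := (starRingEnd ℂ) (u i₀) / (starRingEnd ℂ) (v₀ i₀) with hμ
    have hus : ∀ j, u j = μ * v₀ j := by
      intro j
      have h := mul_left_cancel₀ hxc (hent j)
      rw [hμ, div_mul_eq_mul_div, eq_div_iff hvc]
      linear_combination -h
    refine ⟨c - μ, ?_⟩
    ext j
    have huj := hus j
    have h4 : u j = c * v₀ j - Matrix.vecMul v₀ Dh j := by
      have := congrFun hnab j
      simpa using this
    have : Matrix.vecMul v₀ Dh j = (c - μ) * v₀ j := by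
      rw [h4] at huj; linear_combination -huj
    simpa using this
  · rintro ⟨lam, hlam⟩
    refine ⟨fun v => lam • v - Matrix.vecMul v Dh, ?_, ?_, ?_⟩
    · intro v w
      show lam • (v + w) - Matrix.vecMul (v + w) Dh
          = (lam • v - Matrix.vecMul v Dh) + (lam • w - Matrix.vecMul w Dh)
      rw [Matrix.add_vecMul, smul_add]
      abel
    · intro v A
      show lam • (Matrix.vecMul v A) - Matrix.vecMul (Matrix.vecMul v A) Dh
          = Matrix.vecMul (lam • v - Matrix.vecMul v Dh) A
            + Matrix.vecMul v (Dh * A - A * Dh)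
      rw [Matrix.sub_vecMul, Matrix.smul_vecMul, Matrix.vecMul_sub, Matrix.vecMul_vecMul,
        Matrix.vecMul_vecMul]
      abel
    · have h0 : lam • v₀ - Matrix.vecMul v₀ Dh = 0 := by rw [hlam]; abel
      show ((x : ℂ) • Matrix.vecMulVec (star v₀) (lam • v₀ - Matrix.vecMul v₀ Dh))ᴴ
          = (x : ℂ) • Matrix.vecMulVec (star v₀) (lam • v₀ - Matrix.vecMul v₀ Dh)
      rw [h0]
      ext i j
      simp [Matrix.vecMulVec_apply]
end

section
/- Let D̂ ∈ Mat_N satisfy D̂† = −D̂, and suppose the nonzero row vector v₀ ∈ ℂ^N satisfies v₀·D̂ = λ₀·v₀ for some λ₀ ∈ ℂ. Let x ∈ ℝ∖{0}, set h_x(u,v) = x·(u†v), and let ∇⁰ be any connection on ℂ^N (an additive map with ∇⁰(v·A) = ∇⁰(v)·A + v·(D̂A − AD̂) for all v, A). Then h_x(v₀, ∇⁰(v₀)) is hermitian (equal to its own conjugate transpose) if and only if ∇⁰(v₀) = λ·v₀ for some λ ∈ ℝ. -/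
open Matrix

/-- For anti-hermitian `D̂`, a nonzero left eigenvector `v₀` of `D̂`,
`x ∈ ℝ∖{0}` with metric `h_x(u,v) = x·(u†v)`, and any connection `∇⁰` on `ℂ^N`,
`h_x(v₀, ∇⁰ v₀)` is hermitian iff `∇⁰ v₀ = λ·v₀` for some real `λ`. -/
theorem stmt14 {N : ℕ} (hN : 1 ≤ N) (Dh : Matrix (Fin N) (Fin N) ℂ)
    (hah : Dhᴴ = -Dh) (v₀ : Fin N → ℂ) (hv₀ : v₀ ≠ 0)
    (lam₀ : ℂ) (heig : Matrix.vecMul v₀ Dh = lam₀ • v₀)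
    (x : ℝ) (hx : x ≠ 0)
    (nab : (Fin N → ℂ) → (Fin N → ℂ))
    (hadd : ∀ v w, nab (v + w) = nab v + nab w)
    (hleib : ∀ (v : Fin N → ℂ) (A : Matrix (Fin N) (Fin N) ℂ),
        nab (Matrix.vecMul v A)
          = Matrix.vecMul (nab v) A + Matrix.vecMul v (Dh * A - A * Dh)) :
    ((x : ℂ) • Matrix.vecMulVec (star v₀) (nab v₀))ᴴ
        = (x : ℂ) • Matrix.vecMulVec (star v₀) (nab v₀)
      ↔ ∃ lam : ℝ, nab v₀ = (lam : ℂ) • v₀ := by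
  set w := nab v₀ with hw
  have hxC : (x : ℂ) ≠ 0 := by exact_mod_cast hx
  constructor
  · intro h
    obtain ⟨i, hi⟩ : ∃ i, v₀ i ≠ 0 := by
      by_contra hc; push_neg at hc; exact hv₀ (funext hc)
    have hentry : ∀ a b : Fin N,
        (starRingEnd ℂ) (w b) * v₀ a = (starRingEnd ℂ) (v₀ b) * w a := by
      intro a b
      have h1 := congrFun (congrFun h b) a
      simp only [Matrix.conjTranspose_apply, Matrix.smul_apply,
        Matrix.vecMulVec_apply, Pi.star_apply, smul_eq_mul, star_mul',
        Complex.star_def, _root_.map_mul, Complex.conj_ofReal,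
        Complex.conj_conj, star_star] at h1
      have h2 : (x : ℂ) * ((starRingEnd ℂ) (w b) * v₀ a)
          = (x : ℂ) * ((starRingEnd ℂ) (v₀ b) * w a) := by
        rw [← h1]; ring
      exact mul_left_cancel₀ hxC h2
    set c : ℂ := (starRingEnd ℂ) (w i) / (starRingEnd ℂ) (v₀ i) with hc
    have hvi : (starRingEnd ℂ) (v₀ i) ≠ 0 := by
      simpa using hi
    have hwc : ∀ a, w a = c • v₀ a := by
      intro a
      have : c * v₀ a = w a := by
        rw [hc, div_mul_eq_mul_div, hentry a i, mul_comm, mul_div_assoc,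
          div_self hvi, mul_one]
      rw [smul_eq_mul, this]
    have hcreal : (starRingEnd ℂ) c = c := by
      have h3 := hentry i i
      rw [hwc i] at h3
      have h4 : (starRingEnd ℂ) c * ((starRingEnd ℂ) (v₀ i) * v₀ i)
          = c * ((starRingEnd ℂ) (v₀ i) * v₀ i) := by
        simp only [smul_eq_mul, _root_.map_mul] at h3 ⊢
        linear_combination h3
      exact mul_right_cancel₀ (by simp [hi, hvi]) h4
    refine ⟨c.re, ?_⟩
    have hcre : (c.re : ℂ) = c := Complex.conj_eq_iff_re.mp hcreal
    funext a
    rw [hwc a]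
    simp [hcre]
  · rintro ⟨lam, hl⟩
    rw [hl]
    ext a b
    simp only [Matrix.conjTranspose_apply, Matrix.smul_apply,
      Matrix.vecMulVec_apply, Pi.star_apply, Pi.smul_apply, smul_eq_mul,
      star_mul', Complex.star_def, _root_.map_mul, Complex.conj_ofReal, Complex.conj_conj, star_star]
    ring
end

section
/- Let D̂ ∈ Mat_N satisfy D̂† = −D̂, let v₀ ∈ ℂ^N be a nonzero row vector, let x ∈ ℝ∖{0}, and set h_x(u,v) = x·(u†v). Then there exists a unique connection ∇ on ℂ^N (an additive map with ∇(v·A) = ∇(v)·A + v·(D̂A − AD̂) for all v, A) such that h_x(v₀, ∇(v₀)) is hermitian and D̂·h_x(u,v) − h_x(u,v)·D̂ = h_x(∇(u), v) + h_x(u, ∇(v)) for all u,v ∈ ℂ^N, if and only if v₀ is a left eigenvector of D̂, i.e., v₀·D̂ = λ₀·v₀ for some λ₀ ∈ ℂ. In that case the unique such connection is given by ∇(v) = λ₀·v − v·D̂ for all v ∈ ℂ^N. -/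
open Matrix

/-- `nab` is a connection on `ℂ^N` (w.r.t. the derivation `A ↦ D̂A - AD̂`) making the real metric
calculus determined by `h_x(u,v) = x·(u†v)` and `φ(∂) = v₀` a pseudo-Riemannian calculus:
it is additive, satisfies the Leibniz rule, `h_x(v₀, nab v₀)` is hermitian, and it is metric. -/
def IsLeviCivita {N : ℕ} (Dh : Matrix (Fin N) (Fin N) ℂ) (v₀ : Fin N → ℂ) (x : ℝ)
    (nab : (Fin N → ℂ) → (Fin N → ℂ)) : Prop :=
  (∀ v w, nab (v + w) = nab v + nab w) ∧
  (∀ (v : Fin N → ℂ) (A : Matrix (Fin N) (Fin N) ℂ),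
    nab (Matrix.vecMul v A)
      = Matrix.vecMul (nab v) A + Matrix.vecMul v (Dh * A - A * Dh)) ∧
  (((x : ℂ) • Matrix.vecMulVec (star v₀) (nab v₀))ᴴ
      = (x : ℂ) • Matrix.vecMulVec (star v₀) (nab v₀)) ∧
  (∀ u v : Fin N → ℂ,
    Dh * ((x : ℂ) • Matrix.vecMulVec (star u) v)
        - ((x : ℂ) • Matrix.vecMulVec (star u) v) * Dh
      = (x : ℂ) • Matrix.vecMulVec (star (nab u)) v
          + (x : ℂ) • Matrix.vecMulVec (star u) (nab v))

section Aux

variable {N : ℕ}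

private lemma conj_entry {Dh : Matrix (Fin N) (Fin N) ℂ} (hah : Dhᴴ = -Dh) (i k : Fin N) :
    (starRingEnd ℂ) (Dh k i) = -Dh i k := by
  have := congrFun (congrFun hah i) k
  simpa [Matrix.conjTranspose_apply] using this

private lemma vecMul_apply' (v : Fin N → ℂ) (A : Matrix (Fin N) (Fin N) ℂ) (j : Fin N) :
    Matrix.vecMul v A j = ∑ k, v k * A k j := by
  simp [Matrix.vecMul, dotProduct]

private lemma sum_Dh_conj {Dh : Matrix (Fin N) (Fin N) ℂ} (hah : Dhᴴ = -Dh)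
    (u : Fin N → ℂ) (i : Fin N) :
    ∑ k, Dh i k * (starRingEnd ℂ) (u k) = -(starRingEnd ℂ) (Matrix.vecMul u Dh i) := by
  rw [vecMul_apply', _root_.map_sum]
  rw [← Finset.sum_neg_distrib]
  refine Finset.sum_congr rfl fun k _ => ?_
  rw [_root_.map_mul, conj_entry hah i k]
  ring

private lemma imagEigen {Dh : Matrix (Fin N) (Fin N) ℂ} (hah : Dhᴴ = -Dh)
    {v₀ : Fin N → ℂ} (hv₀ : v₀ ≠ 0) {lam : ℂ}
    (he : Matrix.vecMul v₀ Dh = lam • v₀) :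
    (starRingEnd ℂ) lam = -lam := by
  obtain ⟨i₀, hi₀⟩ := Function.ne_iff.mp hv₀
  simp only [Pi.zero_apply] at hi₀
  set s : ℂ := ∑ i, (starRingEnd ℂ) (v₀ i) * Matrix.vecMul v₀ Dh i with hs
  have hconj : (starRingEnd ℂ) s = -s := by
    have h1 : (starRingEnd ℂ) s = ∑ i, ∑ k, v₀ i * ((starRingEnd ℂ) (v₀ k) * -(Dh i k)) := by
      rw [hs, _root_.map_sum]
      refine Finset.sum_congr rfl fun i _ => ?_
      rw [_root_.map_mul, Complex.conj_conj, vecMul_apply', _root_.map_sum, Finset.mul_sum]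
      refine Finset.sum_congr rfl fun k _ => ?_
      rw [_root_.map_mul, conj_entry hah i k]
    rw [h1, Finset.sum_comm, hs, ← Finset.sum_neg_distrib]
    refine Finset.sum_congr rfl fun k _ => ?_
    rw [vecMul_apply', Finset.mul_sum, ← Finset.sum_neg_distrib]
    refine Finset.sum_congr rfl fun i _ => ?_
    ring
  set n : ℂ := ∑ i, (starRingEnd ℂ) (v₀ i) * v₀ i with hn
  have hsval : s = lam * n := by
    rw [hs, hn, Finset.mul_sum]
    refine Finset.sum_congr rfl fun i _ => ?_
    rw [he]
    simp only [Pi.smul_apply, smul_eq_mul]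
    ring
  have hnreal : (starRingEnd ℂ) n = n := by
    rw [hn, _root_.map_sum]
    refine Finset.sum_congr rfl fun i _ => ?_
    rw [_root_.map_mul, Complex.conj_conj]
    ring
  have hnne : n ≠ 0 := by
    have : n = ((∑ i, Complex.normSq (v₀ i) : ℝ) : ℂ) := by
      rw [hn]
      push_cast
      refine Finset.sum_congr rfl fun i _ => ?_
      rw [← Complex.normSq_eq_conj_mul_self]
    rw [this]
    rw [Complex.ofReal_ne_zero]
    have hpos : 0 < ∑ i, Complex.normSq (v₀ i) := by
      refine Finset.sum_pos' (fun i _ => Complex.normSq_nonneg _) ⟨i₀, Finset.mem_univ _, ?_⟩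
      exact Complex.normSq_pos.mpr hi₀
    exact ne_of_gt hpos
  have : (starRingEnd ℂ) lam * n = -lam * n := by
    have := hconj
    rw [hsval, _root_.map_mul, hnreal] at this
    rw [this]
    ring
  exact mul_right_cancel₀ hnne this

private lemma lc_form {Dh : Matrix (Fin N) (Fin N) ℂ} (hah : Dhᴴ = -Dh)
    {v₀ : Fin N → ℂ} (hv₀ : v₀ ≠ 0) {x : ℝ} (hx : x ≠ 0)
    {nab : (Fin N → ℂ) → (Fin N → ℂ)} (h : IsLeviCivita Dh v₀ x nab) :
    ∃ d : ℂ, (starRingEnd ℂ) d = -d ∧ (∀ v, nab v = d • v - Matrix.vecMul v Dh) ∧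
      Matrix.vecMul v₀ Dh = d • v₀ := by
  obtain ⟨-, -, hherm, hm⟩ := h
  obtain ⟨i₀, hi₀⟩ := Function.ne_iff.mp hv₀
  simp only [Pi.zero_apply] at hi₀
  have hxC : (x : ℂ) ≠ 0 := Complex.ofReal_ne_zero.mpr hx
  have hci : (starRingEnd ℂ) (v₀ i₀) ≠ 0 := by simpa using hi₀
  -- entrywise version of the metric condition
  have key : ∀ u v : Fin N → ℂ, ∀ i j : Fin N,
      (starRingEnd ℂ) (nab u i + Matrix.vecMul u Dh i) * v j
        + (starRingEnd ℂ) (u i) * (nab v j + Matrix.vecMul v Dh j) = 0 := by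
    intro u v i j
    have h1 := congrFun (congrFun (hm u v) i) j
    simp only [Matrix.sub_apply, Matrix.add_apply, Matrix.smul_apply, Matrix.mul_apply,
      Matrix.vecMulVec_apply, Pi.star_apply, smul_eq_mul, Complex.star_def] at h1
    have hL : ∑ k, Dh i k * ((x:ℂ) * ((starRingEnd ℂ) (u k) * v j))
        = (∑ k, Dh i k * (starRingEnd ℂ) (u k)) * ((x:ℂ) * v j) := by
      rw [Finset.sum_mul]
      exact Finset.sum_congr rfl fun k _ => by ring
    have hR : ∑ k, ((x:ℂ) * ((starRingEnd ℂ) (u i) * v k)) * Dh k j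
        = (x:ℂ) * ((starRingEnd ℂ) (u i) * Matrix.vecMul v Dh j) := by
      rw [vecMul_apply', Finset.mul_sum, Finset.mul_sum]
      exact Finset.sum_congr rfl fun k _ => by ring
    rw [hL, hR, sum_Dh_conj hah u i] at h1
    rw [_root_.map_add]
    have h2 : (x:ℂ) * ((starRingEnd ℂ) (nab u i) + (starRingEnd ℂ) (Matrix.vecMul u Dh i)) * v j
        + (x:ℂ) * ((starRingEnd ℂ) (u i)
            * (nab v j + Matrix.vecMul v Dh j)) = 0 := by
      linear_combination -h1
    have h3 : (x:ℂ) * (((starRingEnd ℂ) (nab u i) + (starRingEnd ℂ) (Matrix.vecMul u Dh i)) * v j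
        + (starRingEnd ℂ) (u i) * (nab v j + Matrix.vecMul v Dh j)) = (x:ℂ) * 0 := by
      rw [mul_zero]; linear_combination h2
    exact mul_left_cancel₀ hxC h3
  -- T is scalar
  set c : ℂ := -(starRingEnd ℂ) (nab v₀ i₀ + Matrix.vecMul v₀ Dh i₀)
      / (starRingEnd ℂ) (v₀ i₀) with hc
  have hT : ∀ (v : Fin N → ℂ) (j : Fin N),
      nab v j + Matrix.vecMul v Dh j = c * v j := by
    intro v j
    have h1 := key v₀ v i₀ j
    have hcc : (starRingEnd ℂ) (v₀ i₀) * c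
        = -(starRingEnd ℂ) (nab v₀ i₀ + Matrix.vecMul v₀ Dh i₀) := by
      rw [hc]; field_simp
    have h2 : (starRingEnd ℂ) (v₀ i₀) * (nab v j + Matrix.vecMul v Dh j)
        = (starRingEnd ℂ) (v₀ i₀) * (c * v j) := by
      linear_combination h1 - v j * hcc
    exact mul_left_cancel₀ hci h2
  -- c is purely imaginary
  have hcv : nab v₀ i₀ + Matrix.vecMul v₀ Dh i₀ = c * v₀ i₀ := hT v₀ i₀
  have hcconj : (starRingEnd ℂ) c = -c := by
    have h1 : (starRingEnd ℂ) c
        = -(nab v₀ i₀ + Matrix.vecMul v₀ Dh i₀) / (v₀ i₀) := by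
      rw [hc, map_div₀, map_neg, Complex.conj_conj, Complex.conj_conj]
    rw [h1, hcv]
    field_simp
  have hform : ∀ v, nab v = c • v - Matrix.vecMul v Dh := by
    intro v
    funext j
    have := hT v j
    simp only [Pi.sub_apply, Pi.smul_apply, smul_eq_mul]
    linear_combination this
  -- hermitian condition gives the eigenvector property
  have hherm' : ∀ i j : Fin N,
      v₀ j * (starRingEnd ℂ) (nab v₀ i) = (starRingEnd ℂ) (v₀ i) * nab v₀ j := by
    intro i j
    have h1 := congrFun (congrFun hherm i) j
    simp only [Matrix.conjTranspose_apply, Matrix.smul_apply, Matrix.vecMulVec_apply,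
      Pi.star_apply, smul_eq_mul, Complex.star_def, _root_.map_mul, Complex.conj_conj,
      Complex.conj_ofReal] at h1
    have h2 : (x:ℂ) * (v₀ j * (starRingEnd ℂ) (nab v₀ i))
        = (x:ℂ) * ((starRingEnd ℂ) (v₀ i) * nab v₀ j) := by
      linear_combination h1
    exact mul_left_cancel₀ hxC h2
  -- rewrite using the form of nab
  have hw : ∀ i j : Fin N,
      (starRingEnd ℂ) (v₀ i) * Matrix.vecMul v₀ Dh j
        = 2 * c * (starRingEnd ℂ) (v₀ i) * v₀ j
          + v₀ j * (starRingEnd ℂ) (Matrix.vecMul v₀ Dh i) := by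
    intro i j
    have h1 := hherm' i j
    rw [hform v₀] at h1
    simp only [Pi.sub_apply, Pi.smul_apply, smul_eq_mul, _root_.map_sub, _root_.map_mul, hcconj] at h1
    linear_combination h1
  set mu : ℂ := 2 * c + (starRingEnd ℂ) (Matrix.vecMul v₀ Dh i₀)
      / (starRingEnd ℂ) (v₀ i₀) with hmu
  have heig : Matrix.vecMul v₀ Dh = mu • v₀ := by
    funext j
    have h1 := hw i₀ j
    simp only [Pi.smul_apply, smul_eq_mul, hmu]
    field_simp
    linear_combination h1
  have hmuconj : (starRingEnd ℂ) mu = -mu := imagEigen hah hv₀ heig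
  have hmuc : mu = c := by
    have h1 := hw i₀ i₀
    have h2 : Matrix.vecMul v₀ Dh i₀ = mu * v₀ i₀ := by
      rw [heig]; simp
    rw [h2, _root_.map_mul, hmuconj] at h1
    have h3 : mu * ((starRingEnd ℂ) (v₀ i₀) * v₀ i₀)
        = c * ((starRingEnd ℂ) (v₀ i₀) * v₀ i₀) := by
      linear_combination h1 / 2
    have hne : (starRingEnd ℂ) (v₀ i₀) * v₀ i₀ ≠ 0 := mul_ne_zero hci hi₀
    exact mul_right_cancel₀ hne h3
  exact ⟨c, hcconj, hform, by rw [heig, hmuc]⟩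

private lemma lc_of_eigen {Dh : Matrix (Fin N) (Fin N) ℂ} (hah : Dhᴴ = -Dh)
    {v₀ : Fin N → ℂ} (hv₀ : v₀ ≠ 0) (x : ℝ) {lam₀ : ℂ}
    (he : Matrix.vecMul v₀ Dh = lam₀ • v₀) :
    IsLeviCivita Dh v₀ x (fun v => lam₀ • v - Matrix.vecMul v Dh) := by
  have hlam : (starRingEnd ℂ) lam₀ = -lam₀ := imagEigen hah hv₀ he
  refine ⟨?_, ?_, ?_, ?_⟩
  · intro v w
    simp only [smul_add, Matrix.add_vecMul]
    abel
  · intro v A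
    beta_reduce
    simp only [Matrix.sub_vecMul, Matrix.vecMul_sub, Matrix.smul_vecMul,
      Matrix.vecMul_vecMul]
    abel
  · have h0 : lam₀ • v₀ - Matrix.vecMul v₀ Dh = 0 := by rw [he, sub_self]
    beta_reduce
    rw [h0]
    ext i j
    simp [Matrix.vecMulVec_apply]
  · intro u v
    ext i j
    simp only [Matrix.sub_apply, Matrix.add_apply, Matrix.smul_apply, Matrix.mul_apply,
      Matrix.vecMulVec_apply, Pi.star_apply, Pi.sub_apply, Pi.smul_apply, smul_eq_mul,
      Complex.star_def, _root_.map_sub, _root_.map_mul, hlam]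
    have hL : ∑ k, Dh i k * ((x:ℂ) * ((starRingEnd ℂ) (u k) * v j))
        = (∑ k, Dh i k * (starRingEnd ℂ) (u k)) * ((x:ℂ) * v j) := by
      rw [Finset.sum_mul]
      exact Finset.sum_congr rfl fun k _ => by ring
    have hR : ∑ k, ((x:ℂ) * ((starRingEnd ℂ) (u i) * v k)) * Dh k j
        = (x:ℂ) * ((starRingEnd ℂ) (u i) * Matrix.vecMul v Dh j) := by
      rw [vecMul_apply', Finset.mul_sum, Finset.mul_sum]
      exact Finset.sum_congr rfl fun k _ => by ring
    rw [hL, hR, sum_Dh_conj hah u i]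
    ring

end Aux

/-- There is a unique connection `∇` such that `(C_A, h_x, ∇)` is
pseudo-Riemannian iff `v₀` is a left eigenvector of `D̂`; in that case the unique such
connection is `∇(v) = λ₀·v − v·D̂` where `v₀·D̂ = λ₀·v₀`. -/
theorem stmt15 {N : ℕ} (hN : 1 ≤ N) (Dh : Matrix (Fin N) (Fin N) ℂ)
    (hah : Dhᴴ = -Dh) (v₀ : Fin N → ℂ) (hv₀ : v₀ ≠ 0) (x : ℝ) (hx : x ≠ 0) :
    ((∃! nab : (Fin N → ℂ) → (Fin N → ℂ), IsLeviCivita Dh v₀ x nab)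
      ↔ ∃ lam₀ : ℂ, Matrix.vecMul v₀ Dh = lam₀ • v₀) ∧
    (∀ lam₀ : ℂ, Matrix.vecMul v₀ Dh = lam₀ • v₀ →
      ∀ nab : (Fin N → ℂ) → (Fin N → ℂ),
        IsLeviCivita Dh v₀ x nab ↔ nab = fun v => lam₀ • v - Matrix.vecMul v Dh) := by
  obtain ⟨i₀, hi₀⟩ := Function.ne_iff.mp hv₀
  simp only [Pi.zero_apply] at hi₀
  have heq_lam : ∀ a b : ℂ, a • v₀ = b • v₀ → a = b := by
    intro a b hab
    have := congrFun hab i₀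
    simp only [Pi.smul_apply, smul_eq_mul] at this
    exact mul_right_cancel₀ hi₀ this
  constructor
  · constructor
    · rintro ⟨nab, hnab, -⟩
      obtain ⟨d, -, -, heig⟩ := lc_form hah hv₀ hx hnab
      exact ⟨d, heig⟩
    · rintro ⟨lam₀, he⟩
      refine ⟨fun v => lam₀ • v - Matrix.vecMul v Dh, lc_of_eigen hah hv₀ x he, ?_⟩
      intro nab hnab
      obtain ⟨d, -, hform, heig⟩ := lc_form hah hv₀ hx hnab
      have hd : d = lam₀ := heq_lam d lam₀ (heig.symm.trans he)
      funext v
      rw [hform v, hd]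
  · intro lam₀ he nab
    constructor
    · intro hnab
      obtain ⟨d, -, hform, heig⟩ := lc_form hah hv₀ hx hnab
      have hd : d = lam₀ := heq_lam d lam₀ (heig.symm.trans he)
      funext v
      rw [hform v, hd]
    · rintro rfl
      exact lc_of_eigen hah hv₀ x he
end

section
/- Let D̂₁,…,D̂ₙ ∈ Mat_N be pairwise commuting anti-hermitian matrices that are linearly independent over ℝ, let v₀ ∈ ℂ^N be a row vector of unit norm, let α₁,…,αₙ ∈ ℝ∖{0}, and set e_i = (0,…,0, α_i·v₀, 0,…,0) ∈ (ℂ^N)^n with α_i·v₀ in the i-th slot. Let h : (ℂ^N)^n × (ℂ^N)^n → Mat_N be additive in each argument, satisfy h(u, v·A) = h(u,v)·A for all A ∈ Mat_N, satisfy h(u,v)† = h(v,u), be nondegenerate (if h(u,v) = 0 for all v then u = 0), and suppose h(e_i, e_j) is hermitian for all i,j. Then the following are equivalent: (a) v₀ is a common left eigenvector of D̂₁,…,D̂ₙ, i.e., for each i there is λ_i ∈ ℂ with v₀·D̂_i = λ_i·v₀; (b) there exists a unique family of additive maps ∇₁,…,∇ₙ : (ℂ^N)^n → (ℂ^N)^n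 such that for all i,j,k, all v ∈ (ℂ^N)^n and all A ∈ Mat_N: ∇_i(v·A) = ∇_i(v)·A + v·(D̂_iA − AD̂_i); ∇_i(e_j) = ∇_j(e_i); h(e_i, ∇_j(e_k)) is hermitian; and D̂_i·h(u,v) − h(u,v)·D̂_i = h(∇_i(u), v) + h(u, ∇_i(v)) for all u,v. Moreover, in that case the unique such family is given by ∇_i(v) = λ_i·v − v·D̂_i, where λ_i is the eigenvalue with v₀·D̂_i = λ_i·v₀. -/
/-!
Every pseudo-Riemannian family satisfies the Koszul formula
`2 h(eₖ, ∇ᵢeⱼ) = [D̂ᵢ, h(eⱼ,eₖ)] + [D̂ⱼ, h(eᵢ,eₖ)] − [D̂ₖ, h(eᵢ,eⱼ)]`. Since `h` is nondegenerate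
and the `eᵢ` generate `(ℂ^N)^n` as a right `Mat_N`-module, this determines the family, so there
is at most one. If `v₀D̂ᵢ = λᵢv₀`, then `λᵢ` is imaginary because `D̂ᵢ` is anti-hermitian, and
`∇ᵢv = λᵢv − vD̂ᵢ` is pseudo-Riemannian; it vanishes on the generators.

Conversely, let `Q = 1 − v₀†v₀`, so that `eⱼQ = 0` for all `j`. The Leibniz rule gives
`∇ᵢ(eⱼ)Q = −eⱼD̂ᵢQ`, and multiplying the Koszul formula by `Q` on the right shows that
`Yᵢⱼₖ = h(eⱼ,eₖ)D̂ᵢQ`, which is symmetric in `j, k`, satisfies `Yᵢⱼₖ = Yⱼᵢₖ − Yₖᵢⱼ`. This forces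
`Y = 0`, so `h(eⱼ, eᵢD̂ᵢQ) = 0` for all `j`, hence `eᵢD̂ᵢQ = 0`, i.e. `v₀D̂ᵢQ = 0`: `v₀` is an
eigenvector of `D̂ᵢ`.
-/

open Matrix

/-- The family `∇₁, …, ∇ₙ` makes `(C_A, h)` a pseudo-Riemannian calculus: each `∇ᵢ` is an
additive map satisfying the Leibniz rule for the derivation `A ↦ D̂ᵢA − AD̂ᵢ`, the family is
torsion-free on the generators `eᵢ`, satisfies the hermiticity condition, and is metric. -/
def PseudoRiemannian {N n : ℕ} (D : Fin n → Matrix (Fin N) (Fin N) ℂ)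
    (e : Fin n → (Fin n → Fin N → ℂ))
    (h : (Fin n → Fin N → ℂ) → (Fin n → Fin N → ℂ) → Matrix (Fin N) (Fin N) ℂ)
    (nab : Fin n → (Fin n → Fin N → ℂ) → (Fin n → Fin N → ℂ)) : Prop :=
  (∀ i v w, nab i (v + w) = nab i v + nab i w) ∧
  (∀ (i : Fin n) (v : Fin n → Fin N → ℂ) (A : Matrix (Fin N) (Fin N) ℂ),
    nab i (rAct v A) = rAct (nab i v) A + rAct v (D i * A - A * D i)) ∧
  (∀ i j, nab i (e j) = nab j (e i)) ∧
  (∀ i j l, (h (e i) (nab j (e l)))ᴴ = h (e i) (nab j (e l))) ∧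
  (∀ (i : Fin n) (u v : Fin n → Fin N → ℂ),
    D i * h u v - h u v * D i = h (nab i u) v + h u (nab i v))

section RightAction

variable {N n : ℕ}

@[simp]
theorem rAct_apply (v : Fin n → Fin N → ℂ) (A : Matrix (Fin N) (Fin N) ℂ) (i : Fin n) :
    rAct v A i = v i ᵥ* A :=
  rfl

@[simp]
theorem zero_rAct (A : Matrix (Fin N) (Fin N) ℂ) : rAct (0 : Fin n → Fin N → ℂ) A = 0 := by
  ext; simp

theorem add_rAct (v w : Fin n → Fin N → ℂ) (A : Matrix (Fin N) (Fin N) ℂ) :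
    rAct (v + w) A = rAct v A + rAct w A := by
  ext; simp [add_vecMul]

theorem rAct_sub (v : Fin n → Fin N → ℂ) (A B : Matrix (Fin N) (Fin N) ℂ) :
    rAct v (A - B) = rAct v A - rAct v B := by
  ext; simp [vecMul_sub]

theorem rAct_mul (v : Fin n → Fin N → ℂ) (A B : Matrix (Fin N) (Fin N) ℂ) :
    rAct v (A * B) = rAct (rAct v A) B := by
  ext; simp [vecMul_vecMul]

theorem rAct_smul_one (c : ℂ) (v : Fin n → Fin N → ℂ) : rAct v (c • 1) = c • v := by
  ext; simp [vecMul_smul]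

theorem smul_sub_rAct_leibniz (c : ℂ) (D A : Matrix (Fin N) (Fin N) ℂ) (v : Fin n → Fin N → ℂ) :
    c • rAct v A - rAct (rAct v A) D = rAct (c • v - rAct v D) A + rAct v (D * A - A * D) := by
  ext i : 1
  simp only [rAct_apply, Pi.sub_apply, Pi.add_apply, Pi.smul_apply, sub_vecMul, smul_vecMul,
    vecMul_sub, vecMul_vecMul]
  abel

end RightAction

section Form

variable {N n : ℕ} {h : (Fin n → Fin N → ℂ) → (Fin n → Fin N → ℂ) → Matrix (Fin N) (Fin N) ℂ}

theorem form_zero_right (hadd2 : ∀ u v v', h u (v + v') = h u v + h u v')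
    (u : Fin n → Fin N → ℂ) : h u 0 = 0 :=
  map_zero (AddMonoidHom.mk' (h u) (hadd2 u))

theorem form_sub_right (hadd2 : ∀ u v v', h u (v + v') = h u v + h u v')
    (u v v' : Fin n → Fin N → ℂ) : h u (v - v') = h u v - h u v' :=
  map_sub (AddMonoidHom.mk' (h u) (hadd2 u)) v v'

theorem form_neg_right (hadd2 : ∀ u v v', h u (v + v') = h u v + h u v')
    (u v : Fin n → Fin N → ℂ) : h u (-v) = -h u v :=
  map_neg (AddMonoidHom.mk' (h u) (hadd2 u)) v

theorem form_sub_left (hadd1 : ∀ u u' v, h (u + u') v = h u v + h u' v)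
    (u u' v : Fin n → Fin N → ℂ) : h (u - u') v = h u v - h u' v :=
  map_sub (AddMonoidHom.mk' (h · v) fun u u' => hadd1 u u' v) u u'

theorem form_smul_right (hmul : ∀ u v A, h u (rAct v A) = h u v * A) (c : ℂ)
    (u v : Fin n → Fin N → ℂ) : h u (c • v) = c • h u v := by
  rw [← rAct_smul_one, hmul, Matrix.mul_smul, mul_one]

theorem form_rAct_left (hmul : ∀ u v A, h u (rAct v A) = h u v * A)
    (hsym : ∀ u v, (h u v)ᴴ = h v u) (u v : Fin n → Fin N → ℂ) (A : Matrix (Fin N) (Fin N) ℂ) :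
    h (rAct u A) v = Aᴴ * h u v := by
  rw [← hsym, hmul, conjTranspose_mul, hsym]

theorem form_smul_left (hmul : ∀ u v A, h u (rAct v A) = h u v * A)
    (hsym : ∀ u v, (h u v)ᴴ = h v u) (c : ℂ) (u v : Fin n → Fin N → ℂ) :
    h (c • u) v = star c • h u v := by
  rw [← hsym, form_smul_right hmul, conjTranspose_smul, hsym]

theorem eq_zero_of_forall_form_generator_eq_zero {ι : Type*} [Fintype ι]
    {e : ι → Fin n → Fin N → ℂ}
    (hgen : ∀ v, ∃ B : ι → Matrix (Fin N) (Fin N) ℂ, v = ∑ l, rAct (e l) (B l))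
    (hadd2 : ∀ u v v', h u (v + v') = h u v + h u v')
    (hmul : ∀ u v A, h u (rAct v A) = h u v * A) (hsym : ∀ u v, (h u v)ᴴ = h v u)
    (hnd : ∀ u, (∀ v, h u v = 0) → u = 0) {w : Fin n → Fin N → ℂ} (hw : ∀ k, h (e k) w = 0) :
    w = 0 := by
  refine hnd w fun v => ?_
  obtain ⟨B, rfl⟩ := hgen v
  rw [← AddMonoidHom.mk'_apply (h w) (hadd2 w), map_sum]
  refine Finset.sum_eq_zero fun l _ => ?_
  rw [AddMonoidHom.mk'_apply, hmul, ← hsym, hw, conjTranspose_zero, zero_mul]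

end Form

theorem eq_zero_of_symm_of_eq_sub {ι M : Type*} [AddCommGroup M] [IsAddTorsionFree M]
    {Y : ι → ι → ι → M} (hsymm : ∀ i j k, Y i j k = Y i k j)
    (hrel : ∀ i j k, Y i j k = Y j i k - Y k i j) (i j k : ι) : Y i j k = 0 := by
  have h₁ : Y i j k = Y k j i - Y j k i := by
    rw [hrel j k i]
    abel
  have h₂ : Y i j k = Y j k i - Y k j i := by
    rw [hrel k j i, hsymm i k j]
    abel
  refine nsmul_right_injective two_ne_zero ?_
  calc 2 • Y i j k = (Y k j i - Y j k i) + (Y j k i - Y k j i) := by rw [two_nsmul, ← h₁, ← h₂]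
    _ = 2 • 0 := by abel

theorem eq_of_leibniz_of_eq_on_generators {ι : Type*} [Fintype ι] {N n : ℕ}
    {e : ι → Fin n → Fin N → ℂ}
    (hgen : ∀ v, ∃ B : ι → Matrix (Fin N) (Fin N) ℂ, v = ∑ l, rAct (e l) (B l))
    {D : Matrix (Fin N) (Fin N) ℂ} {nab nab' : (Fin n → Fin N → ℂ) → Fin n → Fin N → ℂ}
    (hadd : ∀ v w, nab (v + w) = nab v + nab w) (hadd' : ∀ v w, nab' (v + w) = nab' v + nab' w)
    (hL : ∀ v A, nab (rAct v A) = rAct (nab v) A + rAct v (D * A - A * D))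
    (hL' : ∀ v A, nab' (rAct v A) = rAct (nab' v) A + rAct v (D * A - A * D))
    (heq : ∀ l, nab (e l) = nab' (e l)) : nab = nab' := by
  funext v
  obtain ⟨B, rfl⟩ := hgen v
  rw [← AddMonoidHom.mk'_apply nab hadd, ← AddMonoidHom.mk'_apply nab' hadd', map_sum, map_sum]
  simp only [AddMonoidHom.mk'_apply, hL, hL', heq]

namespace PseudoRiemannian

variable {N n : ℕ} {D : Fin n → Matrix (Fin N) (Fin N) ℂ} {e : Fin n → Fin n → Fin N → ℂ}
  {h : (Fin n → Fin N → ℂ) → (Fin n → Fin N → ℂ) → Matrix (Fin N) (Fin N) ℂ}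
  {nab : Fin n → (Fin n → Fin N → ℂ) → Fin n → Fin N → ℂ}

theorem two_nsmul_form_eq (hsym : ∀ u v, (h u v)ᴴ = h v u) (hPR : PseudoRiemannian D e h nab)
    (i j k : Fin n) :
    2 • h (e k) (nab i (e j)) =
      ⁅D i, h (e j) (e k)⁆ + ⁅D j, h (e i) (e k)⁆ - ⁅D k, h (e i) (e j)⁆ := by
  obtain ⟨-, -, htor, hherm, hmet⟩ := hPR
  have hflip : ∀ a b c, h (nab a (e b)) (e c) = h (e c) (nab a (e b)) := fun a b c =>
    (hsym _ _).symm.trans (hherm c a b)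
  simp only [Ring.lie_def, hmet, hflip, htor j i, htor k i, htor k j]
  abel

theorem rAct_nab_eq_neg_of_rAct_eq_zero (hPR : PseudoRiemannian D e h nab)
    {v : Fin n → Fin N → ℂ} {Q : Matrix (Fin N) (Fin N) ℂ} (hvQ : rAct v Q = 0) (i : Fin n) :
    rAct (nab i v) Q = -rAct v (D i * Q) := by
  have hzero : nab i 0 = 0 := map_zero (AddMonoidHom.mk' (nab i) (hPR.1 i))
  have hleib := hPR.2.1 i v Q
  rw [hvQ, hzero, rAct_sub, rAct_mul v Q, hvQ, zero_rAct, sub_zero] at hleib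
  exact eq_neg_of_add_eq_zero_left hleib.symm

theorem form_mul_mul_eq_zero (hadd2 : ∀ u v v', h u (v + v') = h u v + h u v')
    (hmul : ∀ u v A, h u (rAct v A) = h u v * A) (hsym : ∀ u v, (h u v)ᴴ = h v u)
    (hherm : ∀ i j, (h (e i) (e j))ᴴ = h (e i) (e j)) (hPR : PseudoRiemannian D e h nab)
    {Q : Matrix (Fin N) (Fin N) ℂ} (hQ : ∀ l, rAct (e l) Q = 0) (i j k : Fin n) :
    h (e i) (e j) * (D k * Q) = 0 := by
  have : IsAddTorsionFree (Matrix (Fin N) (Fin N) ℂ) := .of_module_rat _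
  have hGQ : ∀ a b, h (e a) (e b) * Q = 0 := fun a b => by
    rw [← hmul, hQ, form_zero_right hadd2]
  have hG : ∀ a b, h (e a) (e b) = h (e b) (e a) := fun a b => by rw [← hherm, hsym]
  have hlieQ : ∀ a b c, ⁅D a, h (e b) (e c)⁆ * Q = -(h (e b) (e c) * (D a * Q)) := fun a b c => by
    rw [Ring.lie_def, Matrix.sub_mul, Matrix.mul_assoc, Matrix.mul_assoc, hGQ, Matrix.mul_zero,
      zero_sub]
  have hnabQ : ∀ a b c, h (e c) (nab a (e b)) * Q = -(h (e b) (e c) * (D a * Q)) := fun a b c => by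
    rw [← hmul, hPR.rAct_nab_eq_neg_of_rAct_eq_zero (hQ b), form_neg_right hadd2, hmul, hG]
  refine eq_zero_of_symm_of_eq_sub (Y := fun k i j => h (e i) (e j) * (D k * Q))
    (fun _ _ _ => by rw [hG]) (fun a b c => ?_) k i j
  have hkoszul := congrArg (· * Q) (hPR.two_nsmul_form_eq hsym a b c)
  simp only [smul_mul_assoc, Matrix.add_mul, Matrix.sub_mul, hlieQ, hnabQ] at hkoszul
  linear_combination (norm := module) -hkoszul

theorem unique
    (hgen : ∀ v, ∃ B : Fin n → Matrix (Fin N) (Fin N) ℂ, v = ∑ l, rAct (e l) (B l))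
    (hadd2 : ∀ u v v', h u (v + v') = h u v + h u v')
    (hmul : ∀ u v A, h u (rAct v A) = h u v * A) (hsym : ∀ u v, (h u v)ᴴ = h v u)
    (hnd : ∀ u, (∀ v, h u v = 0) → u = 0) {nab' : Fin n → (Fin n → Fin N → ℂ) → Fin n → Fin N → ℂ}
    (hPR : PseudoRiemannian D e h nab) (hPR' : PseudoRiemannian D e h nab') : nab = nab' := by
  have : IsAddTorsionFree (Matrix (Fin N) (Fin N) ℂ) := .of_module_rat _
  funext i
  refine eq_of_leibniz_of_eq_on_generators hgen (hPR.1 i) (hPR'.1 i) (hPR.2.1 i) (hPR'.2.1 i)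
    fun j => sub_eq_zero.mp <| eq_zero_of_forall_form_generator_eq_zero hgen hadd2 hmul hsym hnd
    fun k => ?_
  rw [form_sub_right hadd2, sub_eq_zero]
  exact nsmul_right_injective two_ne_zero
    ((hPR.two_nsmul_form_eq hsym i j k).trans (hPR'.two_nsmul_form_eq hsym i j k).symm)

end PseudoRiemannian

theorem pseudoRiemannian_smul_sub_rAct {N n : ℕ} {D : Fin n → Matrix (Fin N) (Fin N) ℂ}
    {e : Fin n → Fin n → Fin N → ℂ}
    {h : (Fin n → Fin N → ℂ) → (Fin n → Fin N → ℂ) → Matrix (Fin N) (Fin N) ℂ}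
    (hadd1 : ∀ u u' v, h (u + u') v = h u v + h u' v)
    (hadd2 : ∀ u v v', h u (v + v') = h u v + h u v')
    (hmul : ∀ u v A, h u (rAct v A) = h u v * A) (hsym : ∀ u v, (h u v)ᴴ = h v u)
    (hah : ∀ i, (D i)ᴴ = -D i) {lam : Fin n → ℂ} (hlam : ∀ i, star (lam i) = -lam i)
    (heig : ∀ i j, rAct (e j) (D i) = lam i • e j) :
    PseudoRiemannian D e h fun i v => lam i • v - rAct v (D i) := by
  have hvanish : ∀ i j, lam i • e j - rAct (e j) (D i) = 0 := fun i j => by rw [heig, sub_self]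
  refine ⟨fun i v w => ?_, fun i v A => ?_, fun i j => ?_, fun i j l => ?_, fun i u v => ?_⟩
  · simp only [smul_add, add_rAct]
    abel
  · exact smul_sub_rAct_leibniz _ _ _ _
  · simp only [hvanish]
  · simp only [hvanish, form_zero_right hadd2, conjTranspose_zero]
  · simp only [form_sub_left hadd1, form_sub_right hadd2, form_smul_left hmul hsym,
      form_smul_right hmul, form_rAct_left hmul hsym, hmul, hlam, hah, neg_smul, Matrix.neg_mul]
    abel

open scoped ComplexOrder in
theorem star_eq_neg_of_vecMul_eq_smul {m 𝕜 : Type*} [Fintype m] [RCLike 𝕜] {A : Matrix m m 𝕜}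
    (hA : Aᴴ = -A) {x : m → 𝕜} (hx : x ≠ 0) {c : 𝕜} (hc : x ᵥ* A = c • x) : star c = -c := by
  have hmulVec : A *ᵥ star x = -(star c • star x) := by
    rw [← neg_neg A, ← hA, neg_mulVec, ← star_vecMul, hc, star_smul]
  have hdot : (c + star c) * (x ⬝ᵥ star x) = 0 := by
    have := dotProduct_mulVec x A (star x)
    rw [hmulVec, hc, dotProduct_neg, dotProduct_smul, smul_dotProduct, smul_eq_mul,
      smul_eq_mul] at this
    linear_combination -this
  have hc' := (mul_eq_zero.mp hdot).resolve_right (dotProduct_self_star_eq_zero.not.mpr hx)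
  exact eq_neg_of_add_eq_zero_right hc'

theorem vecMul_one_sub_vecMulVec {m : Type*} [Fintype m] [DecidableEq m] (x z : m → ℂ) :
    z ᵥ* (1 - vecMulVec (star x) x) = z - (z ⬝ᵥ star x) • x := by
  rw [vecMul_sub, vecMul_one, vecMul_vecMulVec]

section Generators

variable {N n : ℕ} {v₀ : Fin N → ℂ} {α : Fin n → ℝ} {e : Fin n → Fin n → Fin N → ℂ}

theorem rAct_generator_apply (he : ∀ i j, e i j = if j = i then (α i : ℂ) • v₀ else 0)
    (A : Matrix (Fin N) (Fin N) ℂ) (i j : Fin n) :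
    rAct (e i) A j = if j = i then (α i : ℂ) • (v₀ ᵥ* A) else 0 := by
  rw [rAct_apply, he]
  split_ifs <;> simp [smul_vecMul]

theorem rAct_generator_eq_smul (he : ∀ i j, e i j = if j = i then (α i : ℂ) • v₀ else 0)
    {A : Matrix (Fin N) (Fin N) ℂ} {c : ℂ} (hA : v₀ ᵥ* A = c • v₀) (i : Fin n) :
    rAct (e i) A = c • e i := by
  ext j : 1
  rw [rAct_generator_apply he, Pi.smul_apply, he]
  split_ifs <;> simp [hA, smul_comm c]

theorem vecMul_eq_zero_of_rAct_generator_eq_zero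
    (he : ∀ i j, e i j = if j = i then (α i : ℂ) • v₀ else 0) (hα : ∀ i, α i ≠ 0)
    {A : Matrix (Fin N) (Fin N) ℂ} {i : Fin n} (hA : rAct (e i) A = 0) : v₀ ᵥ* A = 0 := by
  have := congrFun hA i
  rw [rAct_generator_apply he, if_pos rfl] at this
  exact (smul_eq_zero.mp this).resolve_left (by exact_mod_cast hα i)

theorem exists_eq_sum_rAct_generator (he : ∀ i j, e i j = if j = i then (α i : ℂ) • v₀ else 0)
    (hα : ∀ i, α i ≠ 0) (hv₀ : v₀ ⬝ᵥ star v₀ = 1) (v : Fin n → Fin N → ℂ) :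
    ∃ B : Fin n → Matrix (Fin N) (Fin N) ℂ, v = ∑ l, rAct (e l) (B l) := by
  refine ⟨fun l => (α l : ℂ)⁻¹ • vecMulVec (star v₀) (v l), ?_⟩
  ext j : 1
  have hα' : (α j : ℂ) ≠ 0 := by exact_mod_cast hα j
  simp only [Finset.sum_apply, rAct_generator_apply he, Finset.sum_ite_eq, Finset.mem_univ,
    if_true, vecMul_smul, vecMul_vecMulVec, hv₀, one_smul, smul_smul, mul_inv_cancel₀ hα']

theorem PseudoRiemannian.exists_vecMul_eq_smul
    (he : ∀ i j, e i j = if j = i then (α i : ℂ) • v₀ else 0) (hα : ∀ i, α i ≠ 0)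
    (hv₀ : v₀ ⬝ᵥ star v₀ = 1) {D : Fin n → Matrix (Fin N) (Fin N) ℂ}
    {h : (Fin n → Fin N → ℂ) → (Fin n → Fin N → ℂ) → Matrix (Fin N) (Fin N) ℂ}
    (hadd2 : ∀ u v v', h u (v + v') = h u v + h u v')
    (hmul : ∀ u v A, h u (rAct v A) = h u v * A) (hsym : ∀ u v, (h u v)ᴴ = h v u)
    (hnd : ∀ u, (∀ v, h u v = 0) → u = 0) (hherm : ∀ i j, (h (e i) (e j))ᴴ = h (e i) (e j))
    {nab : Fin n → (Fin n → Fin N → ℂ) → Fin n → Fin N → ℂ} (hPR : PseudoRiemannian D e h nab)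
    (i : Fin n) : ∃ c : ℂ, v₀ ᵥ* D i = c • v₀ := by
  set Q := 1 - vecMulVec (star v₀) v₀
  have hv₀Q : v₀ ᵥ* Q = (0 : ℂ) • v₀ := by
    rw [vecMul_one_sub_vecMulVec, hv₀, one_smul, sub_self, zero_smul]
  have hQ : ∀ l, rAct (e l) Q = 0 := fun l => by rw [rAct_generator_eq_smul he hv₀Q, zero_smul]
  have hDQ : rAct (e i) (D i * Q) = 0 :=
    eq_zero_of_forall_form_generator_eq_zero (exists_eq_sum_rAct_generator he hα hv₀) hadd2 hmul
      hsym hnd fun k => by rw [hmul, hPR.form_mul_mul_eq_zero hadd2 hmul hsym hherm hQ]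
  have := vecMul_eq_zero_of_rAct_generator_eq_zero he hα hDQ
  rw [← vecMul_vecMul, vecMul_one_sub_vecMulVec, sub_eq_zero] at this
  exact ⟨_, this⟩

end Generators

theorem stmt16_general {N n : ℕ}
    (D : Fin n → Matrix (Fin N) (Fin N) ℂ)
    (hah : ∀ i, (D i)ᴴ = -(D i))
    (v₀ : Fin N → ℂ) (hv₀ : ∑ i, Complex.normSq (v₀ i) = 1)
    (α : Fin n → ℝ) (hα : ∀ i, α i ≠ 0)
    (e : Fin n → (Fin n → Fin N → ℂ))
    (he : ∀ i j, e i j = if j = i then (α i : ℂ) • v₀ else 0)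
    (h : (Fin n → Fin N → ℂ) → (Fin n → Fin N → ℂ) → Matrix (Fin N) (Fin N) ℂ)
    (hadd1 : ∀ u u' v, h (u + u') v = h u v + h u' v)
    (hadd2 : ∀ u v v', h u (v + v') = h u v + h u v')
    (hmul : ∀ (u v : Fin n → Fin N → ℂ) (A : Matrix (Fin N) (Fin N) ℂ),
        h u (rAct v A) = h u v * A)
    (hsym : ∀ u v, (h u v)ᴴ = h v u)
    (hnd : ∀ u, (∀ v, h u v = 0) → u = 0)
    (hherm : ∀ i j, (h (e i) (e j))ᴴ = h (e i) (e j)) :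
    ((∀ i, ∃ lam : ℂ, Matrix.vecMul v₀ (D i) = lam • v₀)
      ↔ ∃! nab : Fin n → (Fin n → Fin N → ℂ) → (Fin n → Fin N → ℂ),
          PseudoRiemannian D e h nab) ∧
    (∀ lam : Fin n → ℂ, (∀ i, Matrix.vecMul v₀ (D i) = lam i • v₀) →
      ∀ nab : Fin n → (Fin n → Fin N → ℂ) → (Fin n → Fin N → ℂ),
        PseudoRiemannian D e h nab ↔ nab = fun i v => lam i • v - rAct v (D i)) := by
  have hv₀' : v₀ ⬝ᵥ star v₀ = 1 := by
    rw [← Complex.ofReal_one, ← hv₀]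
    push_cast
    simp [dotProduct, Complex.mul_conj]
  have hcand : ∀ lam : Fin n → ℂ, (∀ i, v₀ ᵥ* D i = lam i • v₀) →
      PseudoRiemannian D e h fun i v => lam i • v - rAct v (D i) := fun lam hlam =>
    pseudoRiemannian_smul_sub_rAct hadd1 hadd2 hmul hsym hah
      (fun i => star_eq_neg_of_vecMul_eq_smul (hah i) (by rintro rfl; simp at hv₀') (hlam i))
      fun i j => rAct_generator_eq_smul he (hlam i) j
  have huniq : ∀ nab nab', PseudoRiemannian D e h nab → PseudoRiemannian D e h nab' →
      nab = nab' := fun _ _ =>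
    PseudoRiemannian.unique (exists_eq_sum_rAct_generator he hα hv₀') hadd2 hmul hsym hnd
  refine ⟨⟨fun heig => ?_, fun ⟨nab, hPR, _⟩ =>
      hPR.exists_vecMul_eq_smul he hα hv₀' hadd2 hmul hsym hnd hherm⟩,
    fun lam hlam nab =>
      ⟨fun hPR => huniq _ _ hPR (hcand lam hlam), fun hnab => hnab ▸ hcand lam hlam⟩⟩
  choose lam hlam using heig
  exact ⟨_, hcand lam hlam, fun nab hPR => huniq _ _ hPR (hcand lam hlam)⟩

/-- For pairwise commuting, ℝ-linearly independent anti-hermitian matrices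
`D̂₁,…,D̂ₙ`, generators `eᵢ = (0,…,αᵢv₀,…,0)` with `v₀` a unit vector, and a metric `h` on
`(ℂ^N)^n` with `h(eᵢ,eⱼ)` hermitian, there is a unique family `∇₁,…,∇ₙ` making the calculus
pseudo-Riemannian iff `v₀` is a common left eigenvector of the `D̂ᵢ`; in that case the unique
family is `∇ᵢ(v) = λᵢ·v − v·D̂ᵢ` with `v₀·D̂ᵢ = λᵢ·v₀`. -/
theorem stmt16 {N n : ℕ} (hN : 1 ≤ N) (hn : 1 ≤ n)
    (D : Fin n → Matrix (Fin N) (Fin N) ℂ)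
    (hcomm : ∀ i j, D i * D j = D j * D i)
    (hah : ∀ i, (D i)ᴴ = -(D i))
    (hli : LinearIndependent ℝ D)
    (v₀ : Fin N → ℂ) (hv₀ : ∑ i, Complex.normSq (v₀ i) = 1)
    (α : Fin n → ℝ) (hα : ∀ i, α i ≠ 0)
    (e : Fin n → (Fin n → Fin N → ℂ))
    (he : ∀ i j, e i j = if j = i then (α i : ℂ) • v₀ else 0)
    (h : (Fin n → Fin N → ℂ) → (Fin n → Fin N → ℂ) → Matrix (Fin N) (Fin N) ℂ)
    (hadd1 : ∀ u u' v, h (u + u') v = h u v + h u' v)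
    (hadd2 : ∀ u v v', h u (v + v') = h u v + h u v')
    (hmul : ∀ (u v : Fin n → Fin N → ℂ) (A : Matrix (Fin N) (Fin N) ℂ),
        h u (rAct v A) = h u v * A)
    (hsym : ∀ u v, (h u v)ᴴ = h v u)
    (hnd : ∀ u, (∀ v, h u v = 0) → u = 0)
    (hherm : ∀ i j, (h (e i) (e j))ᴴ = h (e i) (e j)) :
    ((∀ i, ∃ lam : ℂ, Matrix.vecMul v₀ (D i) = lam • v₀)
      ↔ ∃! nab : Fin n → (Fin n → Fin N → ℂ) → (Fin n → Fin N → ℂ),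
          PseudoRiemannian D e h nab) ∧
    (∀ lam : Fin n → ℂ, (∀ i, Matrix.vecMul v₀ (D i) = lam i • v₀) →
      ∀ nab : Fin n → (Fin n → Fin N → ℂ) → (Fin n → Fin N → ℂ),
        PseudoRiemannian D e h nab ↔ nab = fun i v => lam i • v - rAct v (D i)) :=
  stmt16_general D hah v₀ hv₀ α hα e he h hadd1 hadd2 hmul hsym hnd hherm
end
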